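/- arXiv:2303.07350 — 3 statements merged into one kernel-verified Lean document; each statement's English description precedes it below -/
import Mathlib

section
/- Let n ≥ 2 be a natural number, p an integer, and k = (k_1, k_2, k') ∈ ℕ^n a tuple with k_1 + p ≥ k_2 + 1 and k_2 ≥ p (so that k_2 − p and k_1 + p are natural numbers). Let σ_1,…,σ_n, τ_1,…,τ_n be nonzero complex numbers with σ_1 = κ^p σ_2. Then the numerator functions satisfy X̃_{(k_1,k_2,k')}(σ;τ) = X̃_{(k_2−p, k_1+p, k')}(σ;τ). -/
/-- The symmetric q-Pochhammer bracket
`⟨ζ⟩_m = ∏_{l=0}^{m-1} (κ^l ζ − κ^{−l} ζ⁻¹)`. -/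
noncomputable def br (κ ζ : ℂ) (m : ℕ) : ℂ :=
  ∏ l ∈ Finset.range m, (κ ^ l * ζ - κ ^ (-(l : ℤ)) * ζ⁻¹)

/-- The numerator `X̃_k(σ;τ)` of the summand `X_k(σ;τ)`. -/
noncomputable def Xnum (κ ρ : ℂ) {n : ℕ} (k : Fin n → ℕ) (σ τ : Fin n → ℂ) : ℂ :=
  (∏ i, br κ (κ * ρ) (k i)) *
  (∏ i, ∏ j ∈ Finset.univ.filter (fun j => j ≠ i),
      br κ (ρ⁻¹ * κ ^ (-(k j : ℤ)) * (σ i / σ j)) (k i)) *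
  (∏ a, ∏ j, br κ (ρ * σ j / τ a) (k j))



noncomputable def Tm (κ ρ : ℂ) (e : ℤ) : ℂ := κ ^ e * ρ - κ ^ (-e) * ρ⁻¹

noncomputable def Pz (κ ρ : ℂ) (s t : ℤ) : ℂ :=
  ∏ l ∈ Finset.range (t - s).toNat, Tm κ ρ (s + l)

lemma Pz_concat (κ ρ : ℂ) {s t u : ℤ} (hst : s ≤ t) (htu : t ≤ u) :
    Pz κ ρ s u = Pz κ ρ s t * Pz κ ρ t u := by
  unfold Pz
  have h1 : (u - s).toNat = (t - s).toNat + (u - t).toNat := by omega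
  rw [h1, Finset.prod_range_add]
  congr 1
  apply Finset.prod_congr rfl
  intro l _
  congr 1
  omega

lemma Pz_exchange (κ ρ : ℂ) {s t u v : ℤ} (hst : s ≤ t) (hut : u ≤ t)
    (hsv : s ≤ v) (huv : u ≤ v) :
    Pz κ ρ s t * Pz κ ρ u v = Pz κ ρ s v * Pz κ ρ u t := by
  rcases le_total t v with h | h
  · rw [Pz_concat κ ρ hut h, Pz_concat κ ρ hst h]; ring
  · rw [Pz_concat κ ρ hsv h, Pz_concat κ ρ huv h]; ring

lemma br_shift (κ ρ : ℂ) (hκ : κ ≠ 0) (q : ℤ) (m : ℕ) :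
    br κ (κ ^ q * ρ) m = Pz κ ρ q (q + m) := by
  unfold br Pz
  have h : (q + m - q).toNat = m := by omega
  rw [h]
  apply Finset.prod_congr rfl
  intro l _
  unfold Tm
  rw [← zpow_natCast κ l, mul_inv, ← zpow_neg, ← mul_assoc, ← mul_assoc,
    ← zpow_add₀ hκ, ← zpow_add₀ hκ,
    show (l:ℤ) + q = q + l by omega, show -(l:ℤ) + -q = -(q + (l:ℤ)) by omega]

lemma br_refl (κ ρ : ℂ) (hκ : κ ≠ 0) (q : ℤ) (m : ℕ) :
    br κ (κ ^ q * ρ⁻¹) m = (-1) ^ m * Pz κ ρ (-q - m + 1) (-q + 1) := by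
  unfold br Pz
  have h : (-q + 1 - (-q - m + 1)).toNat = m := by omega
  rw [h]
  have step : ∀ l ∈ Finset.range m,
      (κ ^ l * (κ ^ q * ρ⁻¹) - κ ^ (-(l : ℤ)) * (κ ^ q * ρ⁻¹)⁻¹)
        = (-1) * Tm κ ρ (-(q + l)) := by
    intro l _
    unfold Tm
    rw [mul_inv, inv_inv, ← zpow_natCast κ l, ← zpow_neg, ← mul_assoc, ← mul_assoc,
      ← zpow_add₀ hκ, ← zpow_add₀ hκ,
      show (l:ℤ) + q = -(-(q + (l:ℤ))) by omega, show -(l:ℤ) + -q = -(q + (l:ℤ)) by omega]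
    ring
  rw [Finset.prod_congr rfl step, Finset.prod_mul_distrib, Finset.prod_const,
    Finset.card_range]
  congr 1
  rw [← Finset.prod_range_reflect]
  apply Finset.prod_congr rfl
  intro l hl
  simp only [Finset.mem_range] at hl
  congr 1
  omega

lemma prod_split {M : Type*} [CommMonoid M] {n : ℕ} (f : Fin (n+2) → M) :
    ∏ i, f i = f 0 * f 1 * ∏ i : Fin n, f i.succ.succ := by
  rw [Fin.prod_univ_succ, Fin.prod_univ_succ, Fin.succ_zero_eq_one, mul_assoc]

lemma fin_ss_ne_zero {n : ℕ} (j : Fin n) : (j.succ.succ : Fin (n+2)) ≠ 0 :=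
  Fin.succ_ne_zero _

lemma fin_ss_ne_one {n : ℕ} (j : Fin n) : (j.succ.succ : Fin (n+2)) ≠ 1 := by
  rw [← Fin.succ_zero_eq_one, Ne, Fin.succ_inj]
  exact Fin.succ_ne_zero _

lemma fin_zero_ne_one {n : ℕ} : (0 : Fin (n+2)) ≠ 1 := by
  simp [Fin.ext_iff]

lemma filter_prod_zero {M : Type*} [CommMonoid M] {n : ℕ} (g : Fin (n+2) → M) :
    ∏ j ∈ Finset.univ.filter (fun j => j ≠ (0 : Fin (n+2))), g j
      = g 1 * ∏ j : Fin n, g j.succ.succ := by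
  rw [Finset.prod_filter, prod_split]
  simp [fin_ss_ne_zero, fin_zero_ne_one.symm]

lemma filter_prod_one {M : Type*} [CommMonoid M] {n : ℕ} (g : Fin (n+2) → M) :
    ∏ j ∈ Finset.univ.filter (fun j => j ≠ (1 : Fin (n+2))), g j
      = g 0 * ∏ j : Fin n, g j.succ.succ := by
  rw [Finset.prod_filter, prod_split]
  simp [fin_ss_ne_one, fin_zero_ne_one]

lemma filter_prod_ss {M : Type*} [CommMonoid M] {n : ℕ} (g : Fin (n+2) → M) (i : Fin n) :
    ∏ j ∈ Finset.univ.filter (fun j => j ≠ (i.succ.succ : Fin (n+2))), g j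
      = g 0 * g 1 * ∏ j : Fin n, (if j ≠ i then g j.succ.succ else 1) := by
  rw [Finset.prod_filter, prod_split]
  have h0 : (0 : Fin (n+2)) ≠ i.succ.succ := (fin_ss_ne_zero i).symm
  have h1 : (1 : Fin (n+2)) ≠ i.succ.succ := (fin_ss_ne_one i).symm
  rw [if_pos h0, if_pos h1]
  congr 1
  apply Finset.prod_congr rfl
  intro j _
  congr 1
  simp [Fin.succ_inj]

lemma Pz_congr (κ ρ : ℂ) {s t s' t' : ℤ} (hs : s = s') (ht : t = t') :
    Pz κ ρ s t = Pz κ ρ s' t' := by rw [hs, ht]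

lemma br_base (κ ζ : ℂ) (hκ : κ ≠ 0) (m : ℕ) : br κ ζ m = Pz κ ζ 0 (m : ℤ) := by
  have h := br_shift κ ζ hκ 0 m
  rw [zpow_zero, one_mul, zero_add] at h
  exact h

lemma block_E1 (κ ρ : ℂ) {a b pp : ℤ} (h1 : b + 1 ≤ a + pp) (h2 : pp ≤ b)
    (ha : 0 ≤ a) (hb : 0 ≤ b) :
    Pz κ ρ 1 (a+1) * Pz κ ρ 1 (b+1) * (Pz κ ρ (b-pp-a+1) (b-pp+1) * Pz κ ρ (a+pp-b+1) (a+pp+1))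
    = Pz κ ρ 1 (b-pp+1) * Pz κ ρ 1 (a+pp+1) *
      (Pz κ ρ (a+pp-b+1) (a+1) * Pz κ ρ (b-pp-a+1) (b+1)) := by
  have X1 := Pz_exchange κ ρ (s := 1) (t := a+1) (u := a+pp-b+1) (v := a+pp+1)
    (by omega) (by omega) (by omega) (by omega)
  have X2 := Pz_exchange κ ρ (s := 1) (t := b+1) (u := b-pp-a+1) (v := b-pp+1)
    (by omega) (by omega) (by omega) (by omega)
  linear_combination (Pz κ ρ 1 (b+1) * Pz κ ρ (b-pp-a+1) (b-pp+1)) * X1 +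
    (Pz κ ρ 1 (a+pp+1) * Pz κ ρ (a+pp-b+1) (a+1)) * X2

/-- On the diagonal `σ_1 = κ^p σ_2` the numerators of the summands indexed by
`k = (k_1,k_2,k')` and `φ_p(k) = (k_2 − p, k_1 + p, k')` coincide. -/
theorem numerator_diagonal_identity (n : ℕ) (p : ℤ) (κ ρ : ℂ)
    (hκ0 : κ ≠ 0) (hρ0 : ρ ≠ 0)
    (σ τ : Fin (n + 2) → ℂ) (hσ : ∀ i, σ i ≠ 0) (hτ : ∀ a, τ a ≠ 0)
    (hdiag : σ 0 = κ ^ p * σ 1)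
    (k : Fin (n + 2) → ℕ)
    (h1 : (k 1 : ℤ) + 1 ≤ (k 0 : ℤ) + p) (h2 : p ≤ (k 1 : ℤ)) :
    Xnum κ ρ k σ τ =
      Xnum κ ρ
        (Function.update (Function.update k 0 ((k 1 : ℤ) - p).toNat) 1
          ((k 0 : ℤ) + p).toNat) σ τ := by
  set k₂ : Fin (n+2) → ℕ := Function.update (Function.update k 0 ((k 1 : ℤ) - p).toNat) 1
      ((k 0 : ℤ) + p).toNat with hk₂
  have hk20 : k₂ 0 = ((k 1 : ℤ) - p).toNat := by
    rw [hk₂, Function.update_of_ne fin_zero_ne_one, Function.update_self]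
  have hk21 : k₂ 1 = ((k 0 : ℤ) + p).toNat := by
    rw [hk₂, Function.update_self]
  have hk2ss : ∀ i : Fin n, k₂ i.succ.succ = k i.succ.succ := by
    intro i
    rw [hk₂, Function.update_of_ne (fin_ss_ne_one i), Function.update_of_ne (fin_ss_ne_zero i)]
  -- basic nonvanishing / fraction facts
  have hκinv1 : κ ^ p * κ ^ (-p) = 1 := by rw [← zpow_add₀ hκ0]; simp
  have hfrac : ∀ i, σ i / σ 0 = κ ^ (-p) * (σ i / σ 1) := by
    intro i
    rw [hdiag, div_eq_mul_inv, mul_inv, zpow_neg, div_eq_mul_inv]; ring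
  have hfrac' : ∀ i, σ i / σ 1 = κ ^ p * (σ i / σ 0) := by
    intro i
    rw [hfrac i, ← mul_assoc, hκinv1, one_mul]
  have hs01 : σ 0 / σ 1 = κ ^ p := by rw [hdiag, mul_div_assoc, div_self (hσ 1), mul_one]
  have hs10 : σ 1 / σ 0 = κ ^ (-p) := by
    rw [hdiag, div_eq_mul_inv, mul_inv, zpow_neg]
    rw [show σ 1 * ((κ ^ p)⁻¹ * (σ 1)⁻¹) = (κ ^ p)⁻¹ * (σ 1 * (σ 1)⁻¹) from by ring,
        mul_inv_cancel₀ (hσ 1), mul_one]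
  have hκρ : κ * ρ = κ ^ (1 : ℤ) * ρ := by rw [zpow_one]
  -- the C-block identity
  have HC : (∏ a, ∏ j, br κ (ρ * σ j / τ a) (k j))
      = (∏ a, ∏ j, br κ (ρ * σ j / τ a) (k₂ j)) := by
    apply Finset.prod_congr rfl
    intro t _
    rw [prod_split (fun j => br κ (ρ * σ j / τ t) (k j)),
        prod_split (fun j => br κ (ρ * σ j / τ t) (k₂ j))]
    simp only [hk20, hk21, hk2ss]
    congr 1
    have hσ0t : ρ * σ 0 / τ t = κ ^ p * (ρ * σ 1 / τ t) := by rw [hdiag]; ring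
    rw [hσ0t, br_shift κ _ hκ0, br_shift κ _ hκ0, br_base κ _ hκ0, br_base κ _ hκ0]
    rw [show p + (((k 1 : ℤ) - p).toNat : ℤ) = (k 1 : ℤ) from by omega]
    rw [show ((((k 0 : ℤ) + p).toNat : ℤ)) = (k 0 : ℤ) + p from by omega]
    have X := Pz_exchange κ (ρ * σ 1 / τ t) (s := p) (t := p + (k 0 : ℤ)) (u := 0)
      (v := (k 1 : ℤ)) (by omega) (by omega) (by omega) (by omega)
    rw [X]
    congr 1
    exact Pz_congr κ _ rfl (by omega)
  -- the rows with index ≥ 2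
  have HR : (∏ i : Fin n, ∏ j ∈ Finset.univ.filter (fun j => j ≠ i.succ.succ),
        br κ (ρ⁻¹ * κ ^ (-(k j : ℤ)) * (σ i.succ.succ / σ j)) (k i.succ.succ))
      = (∏ i : Fin n, ∏ j ∈ Finset.univ.filter (fun j => j ≠ i.succ.succ),
        br κ (ρ⁻¹ * κ ^ (-(k₂ j : ℤ)) * (σ i.succ.succ / σ j)) (k i.succ.succ)) := by
    apply Finset.prod_congr rfl
    intro i _
    rw [filter_prod_ss
          (fun j => br κ (ρ⁻¹ * κ ^ (-(k j : ℤ)) * (σ i.succ.succ / σ j)) (k i.succ.succ)),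
        filter_prod_ss
          (fun j => br κ (ρ⁻¹ * κ ^ (-(k₂ j : ℤ)) * (σ i.succ.succ / σ j)) (k i.succ.succ))]
    simp only [hk20, hk21, hk2ss]
    congr 1
    have hIa : ρ⁻¹ * κ ^ (-((((k 1 : ℤ) - p).toNat : ℕ) : ℤ)) * (σ i.succ.succ / σ 0)
        = ρ⁻¹ * κ ^ (-(k 1 : ℤ)) * (σ i.succ.succ / σ 1) := by
      rw [show (-((((k 1 : ℤ) - p).toNat : ℕ) : ℤ)) = -(k 1 : ℤ) + p from by omega,
          zpow_add₀ hκ0, hfrac i.succ.succ]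
      linear_combination (ρ⁻¹ * κ ^ (-(k 1 : ℤ)) * (σ i.succ.succ / σ 1)) * hκinv1
    have hIb : ρ⁻¹ * κ ^ (-((((k 0 : ℤ) + p).toNat : ℕ) : ℤ)) * (σ i.succ.succ / σ 1)
        = ρ⁻¹ * κ ^ (-(k 0 : ℤ)) * (σ i.succ.succ / σ 0) := by
      rw [show (-((((k 0 : ℤ) + p).toNat : ℕ) : ℤ)) = -(k 0 : ℤ) + -p from by omega,
          zpow_add₀ hκ0, hfrac' i.succ.succ]
      linear_combination (ρ⁻¹ * κ ^ (-(k 0 : ℤ)) * (σ i.succ.succ / σ 0)) * hκinv1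
    rw [hIa, hIb, mul_comm]
  -- the columns with index ≥ 2
  have HQ : (∏ j : Fin n, br κ (ρ⁻¹ * κ ^ (-(k j.succ.succ : ℤ)) * (σ 0 / σ j.succ.succ)) (k 0)) *
      (∏ j : Fin n, br κ (ρ⁻¹ * κ ^ (-(k j.succ.succ : ℤ)) * (σ 1 / σ j.succ.succ)) (k 1))
      = (∏ j : Fin n, br κ (ρ⁻¹ * κ ^ (-(k j.succ.succ : ℤ)) * (σ 0 / σ j.succ.succ))
            (((k 1 : ℤ) - p).toNat)) *
        (∏ j : Fin n, br κ (ρ⁻¹ * κ ^ (-(k j.succ.succ : ℤ)) * (σ 1 / σ j.succ.succ))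
            (((k 0 : ℤ) + p).toNat)) := by
    rw [← Finset.prod_mul_distrib, ← Finset.prod_mul_distrib]
    apply Finset.prod_congr rfl
    intro j _
    set m : ℤ := (k j.succ.succ : ℤ) with hm
    have e0 : ρ⁻¹ * κ ^ (-m) * (σ 0 / σ j.succ.succ)
        = κ ^ (p - m) * (ρ⁻¹ * (σ 1 / σ j.succ.succ)) := by
      rw [hdiag, show p - m = p + -m from by ring, zpow_add₀ hκ0]; ring
    have e1 : ρ⁻¹ * κ ^ (-m) * (σ 1 / σ j.succ.succ)
        = κ ^ (-m) * (ρ⁻¹ * (σ 1 / σ j.succ.succ)) := by ring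
    rw [e0, e1, br_shift κ _ hκ0, br_shift κ _ hκ0, br_shift κ _ hκ0, br_shift κ _ hκ0]
    rw [show p - m + (((k 1 : ℤ) - p).toNat : ℤ) = (k 1 : ℤ) - m from by omega,
        show -m + (((k 0 : ℤ) + p).toNat : ℤ) = (k 0 : ℤ) + p - m from by omega]
    have X := Pz_exchange κ (ρ⁻¹ * (σ 1 / σ j.succ.succ)) (s := p - m) (t := p - m + (k 0 : ℤ))
      (u := -m) (v := -m + (k 1 : ℤ)) (by omega) (by omega) (by omega) (by omega)
    rw [X]
    congr 1
    · exact Pz_congr κ _ rfl (by omega)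
    · exact Pz_congr κ _ rfl (by omega)
  -- the (0,1) block
  have A0e : br κ (κ * ρ) (k 0) = Pz κ ρ 1 ((k 0 : ℤ) + 1) := by
    rw [hκρ, br_shift κ ρ hκ0]; exact Pz_congr κ ρ rfl (by omega)
  have A1e : br κ (κ * ρ) (k 1) = Pz κ ρ 1 ((k 1 : ℤ) + 1) := by
    rw [hκρ, br_shift κ ρ hκ0]; exact Pz_congr κ ρ rfl (by omega)
  have A0e' : br κ (κ * ρ) (((k 1 : ℤ) - p).toNat) = Pz κ ρ 1 ((k 1 : ℤ) - p + 1) := by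
    rw [hκρ, br_shift κ ρ hκ0]; exact Pz_congr κ ρ rfl (by omega)
  have A1e' : br κ (κ * ρ) (((k 0 : ℤ) + p).toNat) = Pz κ ρ 1 ((k 0 : ℤ) + p + 1) := by
    rw [hκρ, br_shift κ ρ hκ0]; exact Pz_congr κ ρ rfl (by omega)
  have e01 : ρ⁻¹ * κ ^ (-(k 1 : ℤ)) * (σ 0 / σ 1) = κ ^ (p - (k 1 : ℤ)) * ρ⁻¹ := by
    rw [hs01, show p - (k 1 : ℤ) = -(k 1 : ℤ) + p from by ring, zpow_add₀ hκ0]; ring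
  have e10 : ρ⁻¹ * κ ^ (-(k 0 : ℤ)) * (σ 1 / σ 0) = κ ^ (-(k 0 : ℤ) - p) * ρ⁻¹ := by
    rw [hs10, show -(k 0 : ℤ) - p = -(k 0 : ℤ) + -p from by ring, zpow_add₀ hκ0]; ring
  have e01' : ρ⁻¹ * κ ^ (-((((k 0 : ℤ) + p).toNat : ℕ) : ℤ)) * (σ 0 / σ 1)
      = κ ^ (-(k 0 : ℤ)) * ρ⁻¹ := by
    rw [hs01, show (-((((k 0 : ℤ) + p).toNat : ℕ) : ℤ)) = -(k 0 : ℤ) + -p from by omega,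
        zpow_add₀ hκ0]
    linear_combination (ρ⁻¹ * κ ^ (-(k 0 : ℤ))) * hκinv1
  have e10' : ρ⁻¹ * κ ^ (-((((k 1 : ℤ) - p).toNat : ℕ) : ℤ)) * (σ 1 / σ 0)
      = κ ^ (-(k 1 : ℤ)) * ρ⁻¹ := by
    rw [hs10, show (-((((k 1 : ℤ) - p).toNat : ℕ) : ℤ)) = -(k 1 : ℤ) + p from by omega,
        zpow_add₀ hκ0]
    linear_combination (ρ⁻¹ * κ ^ (-(k 1 : ℤ))) * hκinv1
  have g01e : br κ (ρ⁻¹ * κ ^ (-(k 1 : ℤ)) * (σ 0 / σ 1)) (k 0)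
      = (-1 : ℂ) ^ (k 0) * Pz κ ρ ((k 1 : ℤ) - p - (k 0 : ℤ) + 1) ((k 1 : ℤ) - p + 1) := by
    rw [e01, br_refl κ ρ hκ0]
    exact congrArg (fun z => (-1 : ℂ) ^ (k 0) * z) (Pz_congr κ ρ (by omega) (by omega))
  have g10e : br κ (ρ⁻¹ * κ ^ (-(k 0 : ℤ)) * (σ 1 / σ 0)) (k 1)
      = (-1 : ℂ) ^ (k 1) * Pz κ ρ ((k 0 : ℤ) + p - (k 1 : ℤ) + 1) ((k 0 : ℤ) + p + 1) := by
    rw [e10, br_refl κ ρ hκ0]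
    exact congrArg (fun z => (-1 : ℂ) ^ (k 1) * z) (Pz_congr κ ρ (by omega) (by omega))
  have g01e' : br κ (ρ⁻¹ * κ ^ (-((((k 0 : ℤ) + p).toNat : ℕ) : ℤ)) * (σ 0 / σ 1))
        (((k 1 : ℤ) - p).toNat)
      = (-1 : ℂ) ^ (((k 1 : ℤ) - p).toNat) *
        Pz κ ρ ((k 0 : ℤ) + p - (k 1 : ℤ) + 1) ((k 0 : ℤ) + 1) := by
    rw [e01', br_refl κ ρ hκ0]
    exact congrArg (fun z => (-1 : ℂ) ^ (((k 1 : ℤ) - p).toNat) * z)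
      (Pz_congr κ ρ (by omega) (by omega))
  have g10e' : br κ (ρ⁻¹ * κ ^ (-((((k 1 : ℤ) - p).toNat : ℕ) : ℤ)) * (σ 1 / σ 0))
        (((k 0 : ℤ) + p).toNat)
      = (-1 : ℂ) ^ (((k 0 : ℤ) + p).toNat) *
        Pz κ ρ ((k 1 : ℤ) - p - (k 0 : ℤ) + 1) ((k 1 : ℤ) + 1) := by
    rw [e10', br_refl κ ρ hκ0]
    exact congrArg (fun z => (-1 : ℂ) ^ (((k 0 : ℤ) + p).toNat) * z)
      (Pz_congr κ ρ (by omega) (by omega))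
  have hsgn : ((-1 : ℂ)) ^ (((k 1 : ℤ) - p).toNat) * (-1 : ℂ) ^ (((k 0 : ℤ) + p).toNat)
      = (-1 : ℂ) ^ (k 0) * (-1 : ℂ) ^ (k 1) := by
    rw [← pow_add, ← pow_add]; congr 1; omega
  have HP : br κ (κ * ρ) (k 0) * br κ (κ * ρ) (k 1) *
      (br κ (ρ⁻¹ * κ ^ (-(k 1 : ℤ)) * (σ 0 / σ 1)) (k 0) *
       br κ (ρ⁻¹ * κ ^ (-(k 0 : ℤ)) * (σ 1 / σ 0)) (k 1))
      = br κ (κ * ρ) (((k 1 : ℤ) - p).toNat) * br κ (κ * ρ) (((k 0 : ℤ) + p).toNat) *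
        (br κ (ρ⁻¹ * κ ^ (-((((k 0 : ℤ) + p).toNat : ℕ) : ℤ)) * (σ 0 / σ 1))
            (((k 1 : ℤ) - p).toNat) *
         br κ (ρ⁻¹ * κ ^ (-((((k 1 : ℤ) - p).toNat : ℕ) : ℤ)) * (σ 1 / σ 0))
            (((k 0 : ℤ) + p).toNat)) := by
    have B := block_E1 κ ρ (a := (k 0 : ℤ)) (b := (k 1 : ℤ)) (pp := p) h1 h2
      (by positivity) (by positivity)
    rw [A0e, A1e, A0e', A1e', g01e, g10e, g01e', g10e']
    linear_combination ((-1 : ℂ) ^ (k 0) * (-1 : ℂ) ^ (k 1)) * B -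
      (Pz κ ρ 1 ((k 1 : ℤ) - p + 1) * Pz κ ρ 1 ((k 0 : ℤ) + p + 1) *
        (Pz κ ρ ((k 0 : ℤ) + p - (k 1 : ℤ) + 1) ((k 0 : ℤ) + 1) *
         Pz κ ρ ((k 1 : ℤ) - p - (k 0 : ℤ) + 1) ((k 1 : ℤ) + 1))) * hsgn
  -- assemble
  unfold Xnum
  rw [prod_split (fun i => br κ (κ * ρ) (k i)),
      prod_split (fun i => br κ (κ * ρ) (k₂ i)),
      prod_split (fun i => ∏ j ∈ Finset.univ.filter (fun j => j ≠ i),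
        br κ (ρ⁻¹ * κ ^ (-(k j : ℤ)) * (σ i / σ j)) (k i)),
      prod_split (fun i => ∏ j ∈ Finset.univ.filter (fun j => j ≠ i),
        br κ (ρ⁻¹ * κ ^ (-(k₂ j : ℤ)) * (σ i / σ j)) (k₂ i)),
      filter_prod_zero, filter_prod_one, filter_prod_zero, filter_prod_one]
  simp only [hk20, hk21, hk2ss]
  rw [HC, HR]
  linear_combination
    ((∏ j : Fin n, br κ (ρ⁻¹ * κ ^ (-(k j.succ.succ : ℤ)) * (σ 0 / σ j.succ.succ)) (k 0)) *
     (∏ j : Fin n, br κ (ρ⁻¹ * κ ^ (-(k j.succ.succ : ℤ)) * (σ 1 / σ j.succ.succ)) (k 1)) *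
     (∏ i : Fin n, br κ (κ * ρ) (k i.succ.succ)) *
     (∏ i : Fin n, ∏ j ∈ Finset.univ.filter (fun j => j ≠ i.succ.succ),
        br κ (ρ⁻¹ * κ ^ (-(k₂ j : ℤ)) * (σ i.succ.succ / σ j)) (k i.succ.succ)) *
     (∏ a, ∏ j, br κ (ρ * σ j / τ a) (k₂ j))) * HP +
    (br κ (κ * ρ) (((k 1 : ℤ) - p).toNat) * br κ (κ * ρ) (((k 0 : ℤ) + p).toNat) *
     (br κ (ρ⁻¹ * κ ^ (-((((k 0 : ℤ) + p).toNat : ℕ) : ℤ)) * (σ 0 / σ 1))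
        (((k 1 : ℤ) - p).toNat) *
      br κ (ρ⁻¹ * κ ^ (-((((k 1 : ℤ) - p).toNat : ℕ) : ℤ)) * (σ 1 / σ 0))
        (((k 0 : ℤ) + p).toNat)) *
     (∏ i : Fin n, br κ (κ * ρ) (k i.succ.succ)) *
     (∏ i : Fin n, ∏ j ∈ Finset.univ.filter (fun j => j ≠ i.succ.succ),
        br κ (ρ⁻¹ * κ ^ (-(k₂ j : ℤ)) * (σ i.succ.succ / σ j)) (k i.succ.succ)) *
     (∏ a, ∏ j, br κ (ρ * σ j / τ a) (k₂ j))) * HQ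
end

section
/- Let n ≥ 2, K ∈ ℕ, p ∈ ℤ, and let k = (k_1, k_2, k') ∈ ℕ^n with k_1 + ⋯ + k_n = K, k_1 + p ≥ k_2 + 1 and k_2 ≥ p. Assume κ^{2m} ≠ 1 for all integers m ≥ 1, and assume the genericity conditions: σ_i²/σ_j² ∉ {q^m : m ∈ ℤ} for all 2 ≤ i < j ≤ n, and σ_j²/τ_a² ∉ {q^m : m ∈ ℤ} for all j ≥ 2 and all a (with q = κ²). Then, writing φ_p(k) := (k_2 − p, k_1 + p, k'), the function σ_1 ↦ (σ_1 − κ^p σ_2) · ( X_k((σ_1,σ_2,…,σ_n);τ) + X_{φ_p(k)}((σ_1,σ_2,…,σ_n);τ) ) tends to 0 as σ_1 tends to κ^p σ_2 within ℂ∖{κ^p σ_2}; i.e., the residues of X_k and X_{φ_p(k)} at u_1 = q^p u_2 cancel. -/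
open Filter Topology

/-- The summand `X_k(σ;τ)` of the left-hand side of the duality identity,
written in terms of the square roots `σ_i` of `u_i`, `τ_a` of `v_a`,
`κ` of `q` and `ρ` of `t`. -/
noncomputable def Xsum (κ ρ : ℂ) {n : ℕ} (k : Fin n → ℕ) (σ τ : Fin n → ℂ) : ℂ :=
  (∏ i, br κ (κ * ρ) (k i) / br κ κ (k i)) *
  (∏ i, ∏ j ∈ Finset.univ.filter (fun j => j ≠ i),
      br κ (ρ⁻¹ * κ ^ (-(k j : ℤ)) * (σ i / σ j)) (k i) /
        br κ (κ ^ (-(k j : ℤ)) * (σ i / σ j)) (k i)) *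
  (∏ a, ∏ j, br κ (ρ * σ j / τ a) (k j) / br κ (σ j / τ a) (k j))

/-- The summand `Y_k(σ;τ)` of the right-hand side of the duality identity. -/
noncomputable def Ysum (κ ρ : ℂ) {n : ℕ} (k : Fin n → ℕ) (σ τ : Fin n → ℂ) : ℂ :=
  (∏ a, br κ (κ * ρ) (k a) / br κ κ (k a)) *
  (∏ a, ∏ b ∈ Finset.univ.filter (fun b => b ≠ a),
      br κ (ρ⁻¹ * κ ^ (-(k a : ℤ)) * (τ a / τ b)) (k b) /
        br κ (κ ^ (-(k a : ℤ)) * (τ a / τ b)) (k b)) *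
  (∏ a, ∏ j, br κ (ρ * σ j / τ a) (k a) / br κ (σ j / τ a) (k a))

/-!
Write `k = (α + d, β, …)` with `p = β - α` and `d ≥ 1`, so that `φ_p(k) = (α, β + d, …)`. Near
`σ₀ = c := κ^p σ₁` the only denominator of `X_k` vanishing at `c` is `⟨κ^{-β} σ₀/σ₁⟩_{α+d}`, with a
simple zero; in `X_{φ_p(k)}` it is `⟨κ^{-α} σ₁/σ₀⟩_{β+d}`, the same zero in the inverted variable
`σ₁/σ₀`, so its residue has the opposite sign. The factors not involving `σ₀, σ₁` are common to both
summands, and those coupling `σ₀, σ₁` to the other coordinates agree at `σ₀ = c`, because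
`⟨κ^p ξ⟩_{α+d} ⟨ξ⟩_β` and `⟨κ^p ξ⟩_α ⟨ξ⟩_{β+d}` are products over the same multiset of exponents.
Writing the two-variable factors as products over integer intervals and reflecting the
`ρ⁻¹`-brackets, their residues are `F(α) H(β)` and `-H(α) F(β)` times a common factor, where
`F = N_d · H` with `N_m = ⟨κρ⟩_m / ⟨κ⟩_m`; so they cancel.
-/

open Finset Function

section Limits

variable {α R 𝕜 : Type*} [CommRing R] [TopologicalSpace R] [IsTopologicalRing R] [NormedField 𝕜]

theorem tendsto_mul_add_mul_eq_zero {l : Filter α} {s f₁ f₂ g₁ g₂ : α → R} {L M : R}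
    (hf₁ : Tendsto (fun x => s x * f₁ x) l (𝓝 L)) (hf₂ : Tendsto (fun x => s x * f₂ x) l (𝓝 (-L)))
    (hg₁ : Tendsto g₁ l (𝓝 M)) (hg₂ : Tendsto g₂ l (𝓝 M)) :
    Tendsto (fun x => s x * (f₁ x * g₁ x + f₂ x * g₂ x)) l (𝓝 0) := by
  have h := (hf₁.mul hg₁).add (hf₂.mul hg₂)
  rw [neg_mul, add_neg_cancel] at h
  exact h.congr fun x => by ring

theorem tendsto_div_const_nhdsNE {c : 𝕜} (hc : c ≠ 0) :
    Tendsto (fun z => z / c) (𝓝[≠] c) (𝓝[≠] 1) := by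
  refine tendsto_nhdsWithin_iff.2 ⟨?_, ?_⟩
  · simpa [div_self hc] using ((continuous_id.div_const c).tendsto c).mono_left nhdsWithin_le_nhds
  · filter_upwards [self_mem_nhdsWithin] with z hz
    simpa [div_eq_one_iff_eq hc] using hz

theorem tendsto_inv_nhdsNE_one : Tendsto (fun v : 𝕜 => v⁻¹) (𝓝[≠] 1) (𝓝[≠] 1) :=
  tendsto_nhdsWithin_iff.2
    ⟨by simpa using (continuousAt_inv₀ (one_ne_zero (α := 𝕜))).tendsto.mono_left nhdsWithin_le_nhds,
      by filter_upwards [self_mem_nhdsWithin] with v hv using by simpa using hv⟩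

theorem tendsto_sub_mul_comp_div {F : 𝕜 → 𝕜} {s t L : 𝕜} (hs : s ≠ 0) (ht : t ≠ 0)
    (h : Tendsto (fun v => (v - 1) * F (s * v)) (𝓝[≠] 1) (𝓝 L)) :
    Tendsto (fun z => (z - s * t) * F (z / t)) (𝓝[≠] (s * t)) (𝓝 (s * t * L)) := by
  refine (tendsto_const_nhds.mul (h.comp (tendsto_div_const_nhdsNE (mul_ne_zero hs ht)))).congr
    fun z => ?_
  simp only [Function.comp, show s * (z / (s * t)) = z / t by field_simp]
  field_simp

end Limits

section PairSplitting

variable {ι M : Type*} [Fintype ι] [DecidableEq ι] [CommMonoid M] {x y : ι}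

theorem prod_eq_mul_mul_prod_compl_pair (hxy : x ≠ y) (f : ι → M) :
    ∏ i, f i = f x * f y * ∏ i ∈ {x, y}ᶜ, f i := by
  rw [← prod_pair hxy, prod_mul_prod_compl]

theorem prod_filter_mul_prod_compl_filter (s : Finset ι) (p : ι → Prop) [DecidablePred p]
    (f : ι → M) : (∏ j ∈ s.filter p, f j) * ∏ j ∈ sᶜ.filter p, f j = ∏ j ∈ univ.filter p, f j := by
  rw [← prod_union (disjoint_filter_filter disjoint_compl_right), ← filter_union, union_compl]

theorem prod_prod_filter_ne_eq (hxy : x ≠ y) (g : ι → ι → M) :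
    ∏ i, ∏ j ∈ univ.filter (fun j => j ≠ i), g i j =
      g x y * g y x * (∏ j ∈ {x, y}ᶜ, g x j * g y j * (g j x * g j y)) *
        ∏ i ∈ {x, y}ᶜ, ∏ j ∈ ({x, y}ᶜ : Finset ι).filter (fun j => j ≠ i), g i j := by
  rw [prod_eq_mul_mul_prod_compl_pair hxy]
  conv_lhs => simp only [← prod_filter_mul_prod_compl_filter {x, y}]
  have hS : ∀ i ∈ ({x, y}ᶜ : Finset ι), i ≠ x ∧ i ≠ y := fun i hi => by simpa using hi
  have hx : ({x, y} : Finset ι).filter (fun j => j ≠ x) = {y} := by ext; aesop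
  have hy : ({x, y} : Finset ι).filter (fun j => j ≠ y) = {x} := by ext; aesop
  have hrow : ∀ i ∈ ({x, y}ᶜ : Finset ι),
      (∏ j ∈ ({x, y} : Finset ι).filter (fun j => j ≠ i), g i j) *
        ∏ j ∈ ({x, y}ᶜ : Finset ι).filter (fun j => j ≠ i), g i j =
      g i x * g i y * ∏ j ∈ ({x, y}ᶜ : Finset ι).filter (fun j => j ≠ i), g i j := by
    intro i hi
    rw [filter_true_of_mem fun j hj => by aesop, prod_pair hxy]
  rw [hx, hy, filter_true_of_mem fun j hj => (hS j hj).1,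
    filter_true_of_mem fun j hj => (hS j hj).2, prod_congr rfl hrow]
  simp only [prod_singleton, prod_mul_distrib]
  ac_rfl

end PairSplitting

theorem not_isOfFinOrder_of_pow_two_mul_ne_one {M : Type*} [Monoid M] {x : M}
    (h : ∀ m : ℕ, 1 ≤ m → x ^ (2 * m) ≠ 1) : ¬IsOfFinOrder x := fun hx => by
  obtain ⟨m, hm, hxm⟩ := hx.exists_pow_eq_one
  exact h m hm (by rw [pow_mul', hxm, one_pow])

theorem Fin.mem_compl_zero_one_iff {n : ℕ} {j : Fin (n + 2)} :
    j ∈ ({0, 1}ᶜ : Finset (Fin (n + 2))) ↔ j ≠ 0 ∧ 1 < j := by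
  simp only [mem_compl, mem_insert, mem_singleton, not_or]
  exact ⟨fun h => ⟨h.1, lt_of_le_of_ne (Fin.one_le_of_ne_zero h.1) (Ne.symm h.2)⟩,
    fun h => ⟨h.1, h.2.ne'⟩⟩

noncomputable section

namespace QBracket

variable {κ : ℂ}

def qfactor (κ ζ : ℂ) (l : ℤ) : ℂ := κ ^ l * ζ - κ ^ (-l) * ζ⁻¹

/-- The bracket over the exponent range `[a, a + m)`: `br κ (κ ^ a * ζ) m = qprod κ ζ a m`. -/
def qprod (κ ζ : ℂ) (a : ℤ) (m : ℕ) : ℂ := ∏ i ∈ range m, qfactor κ ζ (a + i)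

theorem qfactor_zpow_mul (hκ0 : κ ≠ 0) (ζ : ℂ) (b l : ℤ) :
    qfactor κ (κ ^ b * ζ) l = qfactor κ ζ (b + l) := by
  simp only [qfactor, mul_inv, ← zpow_neg, neg_add, zpow_add₀ hκ0]
  ring

theorem qprod_zpow_mul (hκ0 : κ ≠ 0) (ζ : ℂ) (b a : ℤ) (m : ℕ) :
    qprod κ (κ ^ b * ζ) a m = qprod κ ζ (b + a) m := by
  simp only [qprod, qfactor_zpow_mul hκ0, add_assoc]

theorem br_eq_qprod (κ ζ : ℂ) (m : ℕ) : br κ ζ m = qprod κ ζ 0 m := by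
  simp [br, qprod, qfactor]

theorem qprod_add (ζ : ℂ) (a : ℤ) (m n : ℕ) :
    qprod κ ζ a (m + n) = qprod κ ζ a m * qprod κ ζ (a + m) n := by
  simp only [qprod, prod_range_add, Nat.cast_add, add_assoc]

theorem qprod_succ (ζ : ℂ) (a : ℤ) (m : ℕ) :
    qprod κ ζ a (m + 1) = qfactor κ ζ a * qprod κ ζ (a + 1) m := by
  rw [add_comm m, qprod_add]
  simp [qprod]

theorem qprod_inv (ζ : ℂ) (a : ℤ) (m : ℕ) :
    qprod κ ζ⁻¹ a m = (-1) ^ m * qprod κ ζ (1 - a - m) m := by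
  rw [qprod, ← prod_range_reflect, qprod, show (-1 : ℂ) ^ m = ∏ _i ∈ range m, (-1 : ℂ) by simp,
    ← prod_mul_distrib]
  refine prod_congr rfl fun i hi => ?_
  have hi : i < m := mem_range.1 hi
  rw [show (1 - a - m + i : ℤ) = -(a + (m - 1 - i : ℕ)) by
    push_cast [Nat.sub_sub, Nat.cast_sub (by omega : 1 + i ≤ m)]; ring]
  simp only [qfactor, inv_inv, neg_neg]
  ring

theorem qfactor_ne_zero (hκ0 : κ ≠ 0) {ζ : ℂ} (hζ : ζ ≠ 0) {l : ℤ}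
    (h : ζ ^ 2 ≠ (κ ^ 2) ^ (-l)) : qfactor κ ζ l ≠ 0 := by
  refine fun h0 => h ?_
  have hl : κ ^ l * ζ = κ ^ (-l) * ζ⁻¹ := sub_eq_zero.1 h0
  rw [zpow_neg, ← zpow_natCast κ 2, zpow_comm, zpow_natCast]
  refine eq_inv_of_mul_eq_one_left ?_
  calc ζ ^ 2 * (κ ^ l) ^ 2 = (κ ^ (-l) * ζ⁻¹) * (κ ^ l * ζ) := by rw [← hl]; ring
    _ = 1 := by rw [zpow_neg]; field_simp

theorem zpow_ne_one_of_not_isOfFinOrder (hκ : ¬IsOfFinOrder κ) {l : ℤ} (hl : l ≠ 0) :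
    (κ ^ 2) ^ l ≠ 1 := by
  rw [isOfFinOrder_iff_zpow_eq_one] at hκ
  push Not at hκ
  rw [← zpow_natCast, ← zpow_mul]
  exact hκ _ (by simpa using hl)

theorem qprod_one_ne_zero (hκ0 : κ ≠ 0) (hκ : ¬IsOfFinOrder κ) {a : ℤ} {m : ℕ}
    (h : 0 < a ∨ a + m ≤ 0) : qprod κ 1 a m ≠ 0 := by
  refine prod_ne_zero_iff.2 fun i hi => qfactor_ne_zero hκ0 one_ne_zero ?_
  have hi : (i : ℤ) < m := by exact_mod_cast mem_range.1 hi
  rw [one_pow, ne_comm]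
  exact zpow_ne_one_of_not_isOfFinOrder hκ (by omega)

def IsQGeneric (κ ζ : ℂ) : Prop := ζ ≠ 0 ∧ ∀ m : ℤ, ζ ^ 2 ≠ (κ ^ 2) ^ m

theorem isQGeneric_div {x y : ℂ} (hx : x ≠ 0) (hy : y ≠ 0)
    (h : ∀ m : ℤ, x ^ 2 / y ^ 2 ≠ (κ ^ 2) ^ m) : IsQGeneric κ (x / y) :=
  ⟨div_ne_zero hx hy, fun m => by rw [div_pow]; exact h m⟩

theorem IsQGeneric.qprod_ne_zero (hκ0 : κ ≠ 0) {ζ : ℂ} (h : IsQGeneric κ ζ) (a : ℤ) (m : ℕ) :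
    qprod κ ζ a m ≠ 0 :=
  prod_ne_zero_iff.2 fun _ _ => qfactor_ne_zero hκ0 h.1 (h.2 _)

theorem IsQGeneric.zpow_mul (hκ0 : κ ≠ 0) {ζ : ℂ} (h : IsQGeneric κ ζ) (b : ℤ) :
    IsQGeneric κ (κ ^ b * ζ) := by
  refine ⟨mul_ne_zero (zpow_ne_zero b hκ0) h.1, fun m hm => h.2 (m - b) ?_⟩
  rw [zpow_sub₀ (pow_ne_zero 2 hκ0), ← hm, mul_pow, ← zpow_natCast (κ ^ b), ← _root_.zpow_mul,
    ← zpow_natCast κ 2, ← _root_.zpow_mul, mul_comm b]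
  field_simp

theorem IsQGeneric.inv {ζ : ℂ} (h : IsQGeneric κ ζ) : IsQGeneric κ ζ⁻¹ :=
  ⟨inv_ne_zero h.1, fun m hm => h.2 (-m) (by rw [zpow_neg, ← hm, inv_pow, inv_inv])⟩

def qratio (κ w ζ : ℂ) (a : ℤ) (m : ℕ) : ℂ := qprod κ (w * ζ) a m / qprod κ ζ a m

theorem qratio_zpow_mul (hκ0 : κ ≠ 0) (w ζ : ℂ) (b a : ℤ) (m : ℕ) :
    qratio κ w (κ ^ b * ζ) a m = qratio κ w ζ (b + a) m := by
  rw [qratio, mul_left_comm, qprod_zpow_mul hκ0, qprod_zpow_mul hκ0, qratio]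

theorem qratio_add (w ζ : ℂ) (a : ℤ) (m n : ℕ) :
    qratio κ w ζ a (m + n) = qratio κ w ζ a m * qratio κ w ζ (a + m) n := by
  rw [qratio, qratio, qratio, qprod_add, qprod_add, mul_div_mul_comm]

theorem qratio_inv (w ζ : ℂ) (a : ℤ) (m : ℕ) :
    qratio κ w ζ⁻¹ a m = qratio κ w⁻¹ ζ (1 - a - m) m := by
  rw [qratio, qratio, show w * ζ⁻¹ = (w⁻¹ * ζ)⁻¹ by rw [mul_inv, inv_inv], qprod_inv, qprod_inv,
    mul_div_mul_left _ _ (pow_ne_zero _ (neg_ne_zero.2 one_ne_zero))]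

/-- Both sides are products over the exponents `[β - α, β) ⊎ [0, β + d)`, shifted by `a`. -/
theorem qratio_exchange (hκ0 : κ ≠ 0) (w ζ : ℂ) (a : ℤ) (α β d : ℕ) :
    qratio κ w (κ ^ ((β : ℤ) - α) * ζ) a (α + d) * qratio κ w ζ a β =
      qratio κ w (κ ^ ((β : ℤ) - α) * ζ) a α * qratio κ w ζ a (β + d) := by
  rw [qratio_zpow_mul hκ0, qratio_zpow_mul hκ0, qratio_add, qratio_add,
    show (β : ℤ) - α + a + α = a + β by ring]
  ring

theorem continuousAt_qprod {ζ : ℂ → ℂ} {z₀ : ℂ} (hζ : ContinuousAt ζ z₀) (h0 : ζ z₀ ≠ 0)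
    (w : ℂ) (a : ℤ) (m : ℕ) : ContinuousAt (fun z => qprod κ (w * ζ z) a m) z₀ := by
  simp only [qprod, qfactor, mul_inv]
  exact tendsto_finsetProd _ fun i _ =>
    (continuousAt_const.mul (continuousAt_const.mul hζ)).sub
      (continuousAt_const.mul (continuousAt_const.mul (hζ.inv₀ h0)))

theorem continuousAt_qratio {ζ : ℂ → ℂ} {z₀ : ℂ} (hζ : ContinuousAt ζ z₀) (h0 : ζ z₀ ≠ 0)
    (w : ℂ) {a : ℤ} {m : ℕ} (hne : qprod κ (ζ z₀) a m ≠ 0) :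
    ContinuousAt (fun z => qratio κ w (ζ z) a m) z₀ :=
  (continuousAt_qprod hζ h0 w a m).div (by simpa using continuousAt_qprod hζ h0 1 a m) hne

theorem continuousAt_qratio_of_isQGeneric (hκ0 : κ ≠ 0) {ζ : ℂ → ℂ} {z₀ : ℂ}
    (hζ : ContinuousAt ζ z₀) (h : IsQGeneric κ (ζ z₀)) (w : ℂ) (a : ℤ) (m : ℕ) :
    ContinuousAt (fun z => qratio κ w (ζ z) a m) z₀ :=
  continuousAt_qratio hζ h.1 w (h.qprod_ne_zero hκ0 a m)

theorem tendsto_sub_one_mul_qratio (hκ0 : κ ≠ 0) (hκ : ¬IsOfFinOrder κ) (w : ℂ) (e : ℕ) :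
    Tendsto (fun v => (v - 1) * qratio κ w v 0 (e + 1)) (𝓝[≠] 1)
      (𝓝 (qprod κ w 0 (e + 1) / (2 * qprod κ 1 1 e))) := by
  have hreg : ContinuousAt (fun v : ℂ => v / (v + 1) * (qprod κ (w * v) 0 (e + 1) /
      qprod κ v 1 e)) 1 :=
    (continuousAt_id.div (continuousAt_id.add continuousAt_const) (by norm_num)).mul
      ((continuousAt_qprod continuousAt_id one_ne_zero w 0 _).div
        (by simpa using continuousAt_qprod continuousAt_id one_ne_zero 1 1 e)
        (qprod_one_ne_zero hκ0 hκ (Or.inl one_pos)))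
  have hv : ∀ᶠ v in 𝓝[≠] (1 : ℂ), (v ≠ 0 ∧ v + 1 ≠ 0) ∧ v ≠ 1 := by
    refine (eventually_nhdsWithin_of_eventually_nhds ?_).and self_mem_nhdsWithin
    exact (eventually_ne_nhds one_ne_zero).and
      ((continuousAt_id.add continuousAt_const).eventually_ne (by norm_num))
  refine Tendsto.congr' ?_ ((hreg.tendsto.mono_left nhdsWithin_le_nhds).trans_eq ?_)
  · filter_upwards [hv] with v ⟨⟨hv0, hv1⟩, hv2⟩
    have hpole : (v - 1) / (v - v⁻¹) = v / (v + 1) := by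
      rw [show v - v⁻¹ = (v - 1) * (v + 1) / v by field_simp; ring]
      field_simp [sub_ne_zero.2 hv2]
    rw [qratio, qprod_succ v 0 e, qfactor, ← hpole, div_mul_div_comm, mul_div_assoc]
    simp only [zpow_zero, neg_zero, one_mul, zero_add]
  · simp only [mul_one]
    congr 1
    ring

theorem tendsto_sub_one_mul_qratio_inv (hκ0 : κ ≠ 0) (hκ : ¬IsOfFinOrder κ) (w : ℂ) (e : ℕ) :
    Tendsto (fun v => (v - 1) * qratio κ w v⁻¹ 0 (e + 1)) (𝓝[≠] 1)
      (𝓝 (-(qprod κ w 0 (e + 1) / (2 * qprod κ 1 1 e)))) := by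
  have h := ((continuous_neg.tendsto 1).mono_left nhdsWithin_le_nhds).mul
    ((tendsto_sub_one_mul_qratio hκ0 hκ w e).comp tendsto_inv_nhdsNE_one)
  refine (h.congr' ?_).trans_eq (by simp)
  filter_upwards [eventually_nhdsWithin_of_eventually_nhds (eventually_ne_nhds one_ne_zero)]
    with v hv
  simp only [Function.comp]
  field_simp
  ring

theorem tendsto_qratio_nhdsNE_one (hκ0 : κ ≠ 0) (hκ : ¬IsOfFinOrder κ) (w : ℂ) {a : ℤ} {m : ℕ}
    (h : a + m ≤ 0) : Tendsto (fun v => qratio κ w v a m) (𝓝[≠] 1) (𝓝 (qratio κ w 1 a m)) :=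
  (continuousAt_qratio continuousAt_id one_ne_zero _
    (qprod_one_ne_zero hκ0 hκ (Or.inr h))).tendsto.mono_left nhdsWithin_le_nhds

theorem tendsto_qratio_inv_nhdsNE_one (hκ0 : κ ≠ 0) (hκ : ¬IsOfFinOrder κ) (w : ℂ) {a : ℤ}
    {m : ℕ} (h : a + m ≤ 0) :
    Tendsto (fun v => qratio κ w v⁻¹ a m) (𝓝[≠] 1) (𝓝 (qratio κ w 1 a m)) := by
  simpa using (continuousAt_qratio (continuousAt_inv₀ one_ne_zero) (by simp) w
    (by simpa using qprod_one_ne_zero hκ0 hκ (Or.inr h))).tendsto.mono_left nhdsWithin_le_nhds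

/-- The factors of `X_k` that involve only the coordinates `σ₀, σ₁`, as a function of
`u = σ₀ / σ₁`. -/
def Xpair (κ ρ : ℂ) (k₀ k₁ : ℕ) (u : ℂ) : ℂ :=
  qratio κ ρ 1 1 k₀ * qratio κ ρ 1 1 k₁ *
    (qratio κ ρ⁻¹ u (-(k₁ : ℤ)) k₀ * qratio κ ρ⁻¹ u⁻¹ (-(k₀ : ℤ)) k₁)

theorem Xpair_zpow_mul (hκ0 : κ ≠ 0) (ρ : ℂ) (k₀ k₁ : ℕ) (p : ℤ) (v : ℂ) :
    Xpair κ ρ k₀ k₁ (κ ^ p * v) = qratio κ ρ 1 1 k₀ * qratio κ ρ 1 1 k₁ *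
      (qratio κ ρ⁻¹ v (p - k₁) k₀ * qratio κ ρ⁻¹ v⁻¹ (-p - k₀) k₁) := by
  rw [Xpair, mul_inv, ← zpow_neg, qratio_zpow_mul hκ0, qratio_zpow_mul hκ0, sub_eq_add_neg,
    sub_eq_add_neg]

theorem qratio_inv_one (ρ : ℂ) (a : ℤ) (m : ℕ) :
    qratio κ ρ⁻¹ 1 a m = qratio κ ρ 1 (1 - a - m) m := by
  simpa using qratio_inv (κ := κ) ρ⁻¹ 1 a m

/-- With `F x` the left side and `H x` the last factor on the right, the residues of `Xpair` at
the exchanged points are `F α * H β` and `-(H α * F β)` up to a common factor. -/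
theorem qratio_add_mul_qratio_inv (ρ : ℂ) (x d : ℕ) :
    qratio κ ρ 1 1 (x + d) * qratio κ ρ⁻¹ 1 (-x) x =
      qratio κ ρ 1 1 d * (qratio κ ρ 1 1 x * qratio κ ρ⁻¹ 1 (-x - d) x) := by
  rw [qratio_inv_one, qratio_inv_one, add_comm x d, qratio_add,
    show (1 : ℤ) - -x - x = 1 by ring, show (1 : ℤ) - (-x - d) - x = 1 + d by ring]
  ring

theorem tendsto_sub_one_mul_Xpair_left (hκ0 : κ ≠ 0) (hκ : ¬IsOfFinOrder κ) (ρ : ℂ) (α β e : ℕ) :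
    Tendsto (fun v => (v - 1) * Xpair κ ρ (α + (e + 1)) β (κ ^ ((β : ℤ) - α) * v)) (𝓝[≠] 1)
      (𝓝 (qratio κ ρ 1 1 (α + (e + 1)) * qratio κ ρ 1 1 β * qratio κ ρ⁻¹ 1 (-α) α *
        qratio κ ρ⁻¹ 1 (-β - (e + 1 : ℕ)) β * (qprod κ ρ⁻¹ 0 (e + 1) / (2 * qprod κ 1 1 e)))) := by
  refine ((((tendsto_const_nhds.mul (tendsto_qratio_nhdsNE_one hκ0 hκ _ (by omega))).mul
    (tendsto_qratio_inv_nhdsNE_one hκ0 hκ _ (by omega))).mul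
    (tendsto_sub_one_mul_qratio hκ0 hκ ρ⁻¹ e))).congr fun v => ?_
  rw [Xpair_zpow_mul hκ0, show (β : ℤ) - α - β = -α by ring, qratio_add ρ⁻¹ v (-α) α,
    show -(α : ℤ) + α = 0 by ring,
    show -((β : ℤ) - α) - ↑(α + (e + 1)) = -β - (e + 1 : ℕ) by push_cast; ring]
  ring

theorem tendsto_sub_one_mul_Xpair_right (hκ0 : κ ≠ 0) (hκ : ¬IsOfFinOrder κ) (ρ : ℂ) (α β e : ℕ) :
    Tendsto (fun v => (v - 1) * Xpair κ ρ α (β + (e + 1)) (κ ^ ((β : ℤ) - α) * v)) (𝓝[≠] 1)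
      (𝓝 (qratio κ ρ 1 1 α * qratio κ ρ 1 1 (β + (e + 1)) * qratio κ ρ⁻¹ 1 (-α - (e + 1 : ℕ)) α *
        qratio κ ρ⁻¹ 1 (-β) β * -(qprod κ ρ⁻¹ 0 (e + 1) / (2 * qprod κ 1 1 e)))) := by
  refine (((tendsto_const_nhds.mul (tendsto_qratio_nhdsNE_one hκ0 hκ _ (by omega))).mul
    (tendsto_qratio_inv_nhdsNE_one hκ0 hκ _ (by omega))).mul
    (tendsto_sub_one_mul_qratio_inv hκ0 hκ ρ⁻¹ e)).congr fun v => ?_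
  rw [Xpair_zpow_mul hκ0,
    show (β : ℤ) - α - ↑(β + (e + 1)) = -α - (e + 1 : ℕ) by push_cast; ring,
    show -((β : ℤ) - α) - α = -β by ring, qratio_add ρ⁻¹ v⁻¹ (-β) β,
    show -(β : ℤ) + β = 0 by ring]
  ring

theorem Xpair_residues (hκ0 : κ ≠ 0) (hκ : ¬IsOfFinOrder κ) (ρ : ℂ) (α β d : ℕ) (hd : 0 < d) :
    ∃ L, Tendsto (fun v => (v - 1) * Xpair κ ρ (α + d) β (κ ^ ((β : ℤ) - α) * v))
        (𝓝[≠] 1) (𝓝 L) ∧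
      Tendsto (fun v => (v - 1) * Xpair κ ρ α (β + d) (κ ^ ((β : ℤ) - α) * v))
        (𝓝[≠] 1) (𝓝 (-L)) := by
  obtain ⟨e, rfl⟩ : ∃ e, d = e + 1 := ⟨d - 1, by omega⟩
  refine ⟨_, tendsto_sub_one_mul_Xpair_left hκ0 hκ ρ α β e,
    (tendsto_sub_one_mul_Xpair_right hκ0 hκ ρ α β e).trans_eq (congrArg 𝓝 ?_)⟩
  linear_combination (qprod κ ρ⁻¹ 0 (e + 1) / (2 * qprod κ 1 1 e)) *
    (qratio κ ρ 1 1 β * qratio κ ρ⁻¹ 1 (-β - (e + 1 : ℕ)) β *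
        qratio_add_mul_qratio_inv ρ α (e + 1) -
      qratio κ ρ 1 1 α * qratio κ ρ⁻¹ 1 (-α - (e + 1 : ℕ)) α *
        qratio_add_mul_qratio_inv ρ β (e + 1))

section XsumSplitting

variable {m : ℕ} (κ ρ : ℂ) (k : Fin m → ℕ) (σ τ : Fin m → ℂ) (x y : Fin m)

def interFactor (i j : Fin m) : ℂ := qratio κ ρ⁻¹ (σ i / σ j) (-(k j : ℤ)) (k i)

def couplingFactor (a j : Fin m) : ℂ := qratio κ ρ (σ j / τ a) 0 (k j)

/-- The factors of `X_k` coupling the pair `x, y` to the other coordinates. -/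
def crossX : ℂ :=
  (∏ j ∈ {x, y}ᶜ, interFactor κ ρ k σ x j * interFactor κ ρ k σ y j *
      (interFactor κ ρ k σ j x * interFactor κ ρ k σ j y)) *
    ∏ a, couplingFactor κ ρ k σ τ a x * couplingFactor κ ρ k σ τ a y

/-- The factors of `X_k` not involving the pair `x, y`. -/
def restX : ℂ :=
  (∏ i ∈ {x, y}ᶜ, qratio κ ρ 1 1 (k i)) *
    (∏ i ∈ {x, y}ᶜ, ∏ j ∈ ({x, y}ᶜ : Finset (Fin m)).filter (fun j => j ≠ i),
      interFactor κ ρ k σ i j) *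
    ∏ a, ∏ j ∈ {x, y}ᶜ, couplingFactor κ ρ k σ τ a j

variable {κ}

theorem br_div_br_eq_qratio (hκ0 : κ ≠ 0) (w ζ : ℂ) (b : ℤ) (n : ℕ) :
    br κ (κ ^ b * (w * ζ)) n / br κ (κ ^ b * ζ) n = qratio κ w ζ b n := by
  rw [br_eq_qprod, br_eq_qprod, qprod_zpow_mul hκ0, qprod_zpow_mul hκ0, add_zero, qratio]

theorem Xsum_eq_prod (hκ0 : κ ≠ 0) :
    Xsum κ ρ k σ τ = (∏ i, qratio κ ρ 1 1 (k i)) *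
      (∏ i, ∏ j ∈ univ.filter (fun j => j ≠ i), interFactor κ ρ k σ i j) *
      ∏ a, ∏ j, couplingFactor κ ρ k σ τ a j := by
  have hnorm n : br κ (κ * ρ) n / br κ κ n = qratio κ ρ 1 1 n := by
    simpa using br_div_br_eq_qratio hκ0 ρ 1 1 n
  have hinter (e : ℤ) ζ n :
      br κ (ρ⁻¹ * κ ^ e * ζ) n / br κ (κ ^ e * ζ) n = qratio κ ρ⁻¹ ζ e n := by
    rw [← br_div_br_eq_qratio hκ0, mul_left_comm, mul_assoc]
  have hcoup (s t : ℂ) n : br κ (ρ * s / t) n / br κ (s / t) n = qratio κ ρ (s / t) 0 n := by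
    simpa [mul_div_assoc] using br_div_br_eq_qratio hκ0 ρ (s / t) 0 n
  simp only [Xsum, interFactor, couplingFactor, hnorm, hinter, hcoup]

theorem Xsum_eq_Xpair_mul (hκ0 : κ ≠ 0) (hxy : x ≠ y) :
    Xsum κ ρ k σ τ =
      Xpair κ ρ (k x) (k y) (σ x / σ y) * crossX κ ρ k σ τ x y * restX κ ρ k σ τ x y := by
  rw [Xsum_eq_prod ρ k σ τ hκ0, prod_eq_mul_mul_prod_compl_pair hxy, prod_prod_filter_ne_eq hxy]
  simp only [fun a => prod_eq_mul_mul_prod_compl_pair hxy (couplingFactor κ ρ k σ τ a),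
    prod_mul_distrib, Xpair, crossX, restX, interFactor, inv_div]
  ring

variable {k σ x y}

theorem restX_congr {k' : Fin m → ℕ} {σ' : Fin m → ℂ}
    (hk : ∀ j ∈ ({x, y}ᶜ : Finset (Fin m)), k' j = k j)
    (hσ : ∀ j ∈ ({x, y}ᶜ : Finset (Fin m)), σ' j = σ j) :
    restX κ ρ k' σ' τ x y = restX κ ρ k σ τ x y := by
  unfold restX interFactor couplingFactor
  congr 1
  · congr 1
    · exact prod_congr rfl fun i hi => by rw [hk i hi]
    · refine prod_congr rfl fun i hi => prod_congr rfl fun j hj => ?_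
      rw [hk i hi, hk j (mem_filter.1 hj).1, hσ i hi, hσ j (mem_filter.1 hj).1]
  · exact prod_congr rfl fun a _ => prod_congr rfl fun j hj => by rw [hk j hj, hσ j hj]

theorem Xsum_update_eq (hκ0 : κ ≠ 0) (hxy : x ≠ y) {k' : Fin m → ℕ}
    (hk : ∀ j ∈ ({x, y}ᶜ : Finset (Fin m)), k' j = k j) (z : ℂ) :
    Xsum κ ρ k' (update σ x z) τ = Xpair κ ρ (k' x) (k' y) (z / σ y) *
      (crossX κ ρ k' (update σ x z) τ x y * restX κ ρ k σ τ x y) := by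
  rw [Xsum_eq_Xpair_mul ρ k' _ τ x y hκ0 hxy, mul_assoc, update_self, update_of_ne hxy.symm,
    restX_congr ρ τ hk fun j hj => update_of_ne (by simp_all) _ _]

end XsumSplitting

section Exchange

variable {m : ℕ} (ρ : ℂ) (k : Fin m → ℕ) (σ τ : Fin m → ℂ) {x y : Fin m}

theorem continuousAt_crossX (hκ0 : κ ≠ 0) (hxy : x ≠ y) (b : ℤ)
    (hσ : ∀ j ∈ ({x, y}ᶜ : Finset (Fin m)), IsQGeneric κ (σ y / σ j))
    (hτ : ∀ a, IsQGeneric κ (σ y / τ a)) :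
    ContinuousAt (fun z => crossX κ ρ k (update σ x z) τ x y) (κ ^ b * σ y) := by
  have hc : κ ^ b * σ y ≠ 0 :=
    mul_ne_zero (zpow_ne_zero b hκ0) (div_ne_zero_iff.1 (hτ x).1).1
  unfold crossX
  refine ContinuousAt.mul (tendsto_finsetProd _ fun j hj => ?_) (tendsto_finsetProd _ fun a _ => ?_)
  · obtain ⟨hjx, hjy⟩ : j ≠ x ∧ j ≠ y := by simpa using hj
    simp only [interFactor, update_self, update_of_ne hjx, update_of_ne hxy.symm]
    refine ((continuousAt_qratio_of_isQGeneric hκ0 (continuousAt_id.div_const _) ?_ _ _ _).mul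
      continuousAt_const).mul ((continuousAt_qratio_of_isQGeneric hκ0
        (continuousAt_const.div continuousAt_id hc) ?_ _ _ _).mul continuousAt_const)
    · simpa [mul_div_assoc] using (hσ j hj).zpow_mul hκ0 b
    · have h := ((hσ j hj).zpow_mul hκ0 b).inv
      rwa [← mul_div_assoc, inv_div] at h
  · simp only [couplingFactor, update_self, update_of_ne hxy.symm]
    refine (continuousAt_qratio_of_isQGeneric hκ0 (continuousAt_id.div_const _) ?_ _ _ _).mul
      continuousAt_const
    simpa [mul_div_assoc] using (hτ a).zpow_mul hκ0 b

theorem crossX_exchange (hκ0 : κ ≠ 0) (hxy : x ≠ y) {α β d : ℕ} (hkx : k x = α + d)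
    (hky : k y = β) :
    crossX κ ρ (update (update k x α) y (β + d)) (update σ x (κ ^ ((β : ℤ) - α) * σ y)) τ x y =
      crossX κ ρ k (update σ x (κ ^ ((β : ℤ) - α) * σ y)) τ x y := by
  unfold crossX
  congr 1
  · refine prod_congr rfl fun j hj => ?_
    obtain ⟨hjx, hjy⟩ : j ≠ x ∧ j ≠ y := by simpa using hj
    simp only [interFactor, update_self, update_of_ne hjx, update_of_ne hjy, update_of_ne hxy,
      update_of_ne hxy.symm, hkx, hky]
    have hσ : σ j / (κ ^ ((β : ℤ) - α) * σ y) = κ ^ (-((β : ℤ) - α)) * (σ j / σ y) := by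
      rw [zpow_neg]
      field_simp
    rw [mul_div_assoc, hσ, qratio_exchange hκ0, qratio_zpow_mul hκ0 ρ⁻¹ (σ j / σ y) _ (-α),
      qratio_zpow_mul hκ0 ρ⁻¹ (σ j / σ y) _ (-↑(α + d)),
      show -((β : ℤ) - α) + -α = -β by ring,
      show -((β : ℤ) - α) + -↑(α + d) = -↑(β + d) by push_cast; ring]
    ring
  · refine prod_congr rfl fun a _ => ?_
    simp only [couplingFactor, update_self, update_of_ne hxy, update_of_ne hxy.symm, hkx, hky]
    rw [mul_div_assoc]
    exact (qratio_exchange hκ0 _ _ _ _ _ _).symm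

end Exchange

end QBracket

end

open QBracket

theorem X_residues_cancel_diagonal_general (n : ℕ) (p : ℤ) (κ ρ : ℂ)
    (hκ0 : κ ≠ 0)
    (hκ : ∀ m : ℕ, 1 ≤ m → κ ^ (2 * m) ≠ 1)
    (σ τ : Fin (n + 2) → ℂ) (hσ : ∀ i : Fin (n + 2), i ≠ 0 → σ i ≠ 0)
    (hτ : ∀ a, τ a ≠ 0)
    (hσσ : ∀ i j : Fin (n + 2), i ≠ 0 → j ≠ 0 → i < j →
      ∀ m : ℤ, (σ i) ^ 2 / (σ j) ^ 2 ≠ (κ ^ 2) ^ m)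
    (hστ : ∀ j : Fin (n + 2), j ≠ 0 → ∀ a : Fin (n + 2),
      ∀ m : ℤ, (σ j) ^ 2 / (τ a) ^ 2 ≠ (κ ^ 2) ^ m)
    (k : Fin (n + 2) → ℕ)
    (h1 : (k 1 : ℤ) + 1 ≤ (k 0 : ℤ) + p) (h2 : p ≤ (k 1 : ℤ)) :
    Tendsto
      (fun z : ℂ => (z - κ ^ p * σ 1) *
        (Xsum κ ρ k (Function.update σ 0 z) τ +
         Xsum κ ρ
           (Function.update (Function.update k 0 ((k 1 : ℤ) - p).toNat) 1
             ((k 0 : ℤ) + p).toNat)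
           (Function.update σ 0 z) τ))
      (𝓝[≠] (κ ^ p * σ 1)) (𝓝 0) := by
  have hκ' := not_isOfFinOrder_of_pow_two_mul_ne_one hκ
  obtain ⟨α, d, hd, hk0, rfl⟩ : ∃ α d : ℕ, 0 < d ∧ k 0 = α + d ∧ p = (k 1 : ℤ) - α :=
    ⟨((k 1 : ℤ) - p).toNat, k 0 - ((k 1 : ℤ) - p).toNat, by omega, by omega, by omega⟩
  rw [show ((k 1 : ℤ) - ((k 1 : ℤ) - α)).toNat = α by omega,
    show ((k 0 : ℤ) + ((k 1 : ℤ) - α)).toNat = k 1 + d by omega]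
  have h10 : (1 : Fin (n + 2)) ≠ 0 := Fin.zero_lt_one.ne'
  have hS {j} (hj : j ∈ ({0, 1}ᶜ : Finset (Fin (n + 2)))) := Fin.mem_compl_zero_one_iff.1 hj
  have hk' (j) (hj : j ∈ ({0, 1}ᶜ : Finset (Fin (n + 2)))) :
      update (update k 0 α) 1 (k 1 + d) j = k j := by
    rw [update_of_ne (hS hj).2.ne', update_of_ne (hS hj).1]
  have hgen (j) (hj : j ∈ ({0, 1}ᶜ : Finset (Fin (n + 2)))) : IsQGeneric κ (σ 1 / σ j) :=
    isQGeneric_div (hσ 1 h10) (hσ j (hS hj).1) (hσσ 1 j h10 (hS hj).1 (hS hj).2)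
  have hgenτ a : IsQGeneric κ (σ 1 / τ a) := isQGeneric_div (hσ 1 h10) (hτ a) (hστ 1 h10 a)
  have hcross (k' : Fin (n + 2) → ℕ) : Tendsto (fun z => crossX κ ρ k' (update σ 0 z) τ 0 1 *
      restX κ ρ k σ τ 0 1) (𝓝[≠] (κ ^ ((k 1 : ℤ) - α) * σ 1)) _ :=
    ((continuousAt_crossX ρ k' σ τ hκ0 h10.symm _ hgen hgenτ).tendsto.mono_left
      nhdsWithin_le_nhds).mul_const _
  have hcross' := hcross (update (update k 0 α) 1 (k 1 + d))
  rw [crossX_exchange ρ k σ τ hκ0 h10.symm hk0 rfl] at hcross'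
  obtain ⟨L, hL, hL'⟩ := Xpair_residues hκ0 hκ' ρ α (k 1) d hd
  refine (tendsto_mul_add_mul_eq_zero (tendsto_sub_mul_comp_div (zpow_ne_zero _ hκ0) (hσ 1 h10) hL)
    ((tendsto_sub_mul_comp_div (zpow_ne_zero _ hκ0) (hσ 1 h10) hL').trans_eq
      (congrArg 𝓝 (mul_neg _ L))) (hcross k) hcross').congr fun z => ?_
  rw [Xsum_update_eq ρ τ hκ0 h10.symm (fun _ _ => rfl), Xsum_update_eq ρ τ hκ0 h10.symm hk',
    hk0, update_self, update_of_ne h10.symm, update_self]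

/-- Residue cancellation at the diagonal `u_1 = q^p u_2`: on the two-sided pairing
`k ↔ φ_p(k)`, the residues of the summands `X_k` and `X_{φ_p(k)}` at `σ_1 = κ^p σ_2`
cancel, expressed as the vanishing of the limit of
`(σ_1 − κ^p σ_2)(X_k + X_{φ_p(k)})` as `σ_1 → κ^p σ_2`. -/
theorem X_residues_cancel_diagonal (n K : ℕ) (p : ℤ) (κ ρ : ℂ)
    (hκ0 : κ ≠ 0) (hρ0 : ρ ≠ 0)
    (hκ : ∀ m : ℕ, 1 ≤ m → κ ^ (2 * m) ≠ 1)
    (σ τ : Fin (n + 2) → ℂ) (hσ : ∀ i : Fin (n + 2), i ≠ 0 → σ i ≠ 0)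
    (hτ : ∀ a, τ a ≠ 0)
    (hσσ : ∀ i j : Fin (n + 2), i ≠ 0 → j ≠ 0 → i < j →
      ∀ m : ℤ, (σ i) ^ 2 / (σ j) ^ 2 ≠ (κ ^ 2) ^ m)
    (hστ : ∀ j : Fin (n + 2), j ≠ 0 → ∀ a : Fin (n + 2),
      ∀ m : ℤ, (σ j) ^ 2 / (τ a) ^ 2 ≠ (κ ^ 2) ^ m)
    (k : Fin (n + 2) → ℕ) (hk : (∑ i, k i) = K)
    (h1 : (k 1 : ℤ) + 1 ≤ (k 0 : ℤ) + p) (h2 : p ≤ (k 1 : ℤ)) :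
    Tendsto
      (fun z : ℂ => (z - κ ^ p * σ 1) *
        (Xsum κ ρ k (Function.update σ 0 z) τ +
         Xsum κ ρ
           (Function.update (Function.update k 0 ((k 1 : ℤ) - p).toNat) 1
             ((k 0 : ℤ) + p).toNat)
           (Function.update σ 0 z) τ))
      (𝓝[≠] (κ ^ p * σ 1)) (𝓝 0) :=
  X_residues_cancel_diagonal_general n p κ ρ hκ0 hκ σ τ hσ hτ hσσ hστ k h1 h2
end

section
/- Let n ≥ 2, K ∈ ℕ and p ∈ ℤ. Assume κ^{2m} ≠ 1 for all integers m ≥ 1, and assume the genericity conditions: σ_i²/σ_j² ∉ {q^m : m ∈ ℤ} for 2 ≤ i < j ≤ n, and σ_j²/τ_a² ∉ {q^m : m ∈ ℤ} for all j ≥ 2 and all a (with q = κ²). Then the total residue of the sum ∑_{k ∈ ℕ^n, |k|=K} X_k at u_1 = q^p u_2 vanishes: the function σ_1 ↦ (σ_1 − κ^p σ_2) · ∑_{k ∈ ℕ^n, |k|=K} X_k((σ_1,σ_2,…,σ_n);τ) tends to 0 as σ_1 tends to κ^p σ_2 within ℂ∖{κ^p σ_2}. In other words, the left-hand side of the duality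 identity has no poles along the diagonals u_1 = q^p u_2. -/
/-!
Indices start at `0`, so `σ 0` is the moving variable and the pole sits at `σ 0 = κ ^ p * σ 1`.
Near it the genericity hypotheses keep every bracket of `X_k` away from zero except the two
diagonal denominators `⟨κ^(-k₁) σ₀/σ₁⟩_{k₀}` and `⟨κ^(-k₀) σ₁/σ₀⟩_{k₁}`; the first has a simple zero
iff `0 ∈ [p - k₁, p - k₁ + k₀)`, the second iff `0 ∈ [-p - k₀, -p - k₀ + k₁)`, and never both.
The involution `(k₀, k₁) ↦ (k₁ - p, k₀ + p)` preserves `|k|` and exchanges the two cases, and the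
residues of paired terms cancel: at the pole every bracket is a product of `κ^l w - κ^(-l) w⁻¹`
over an interval of integers, the involution only rearranges these intervals
(`[x, y) + [u, v) = [x, v) + [u, y)`), and the vanishing factor is `w - w⁻¹` in one term and
`w⁻¹ - w` in the other.
-/

open Filter Topology

open Finset

section Intervals

variable {α M : Type*} [LinearOrder α] [LocallyFiniteOrder α] [CommMonoid M]

lemma prod_Ico_mul_prod_Ico (f : α → M) {a b c : α} (hab : a ≤ b) (hbc : b ≤ c) :
    (∏ l ∈ Ico a b, f l) * ∏ l ∈ Ico b c, f l = ∏ l ∈ Ico a c, f l := by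
  rw [← prod_union (Ico_disjoint_Ico_consecutive a b c), Ico_union_Ico_eq_Ico hab hbc]

lemma prod_Ico_mul_prod_Ico_swap (f : α → M) {x y u v : α} (hxy : x ≤ y) (huv : u ≤ v)
    (hxv : x ≤ v) (huy : u ≤ y) :
    (∏ l ∈ Ico x y, f l) * ∏ l ∈ Ico u v, f l = (∏ l ∈ Ico x v, f l) * ∏ l ∈ Ico u y, f l := by
  rcases le_total x u with h | h
  · rw [← prod_Ico_mul_prod_Ico f h huy, ← prod_Ico_mul_prod_Ico f h huv]
    ac_rfl
  · rw [← prod_Ico_mul_prod_Ico f h hxv, ← prod_Ico_mul_prod_Ico f h hxy]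
    ac_rfl

end Intervals

lemma prod_eq_mul_prod_update_one {ι M : Type*} [DecidableEq ι] [CommMonoid M] {s : Finset ι}
    {i : ι} (h : i ∈ s) (f : ι → M) : ∏ x ∈ s, f x = f i * ∏ x ∈ s, Function.update f i 1 x := by
  rw [prod_update_of_mem h, one_mul]
  exact prod_eq_mul_prod_sdiff_singleton_of_mem h f

lemma sum_eq_sum_add_sum_involution {α β : Type*} [AddCommMonoid β] {s : Finset α}
    {P Q : α → Prop} [DecidablePred P] [DecidablePred Q] (e : α → α) (f : α → β)
    (hP : ∀ x ∈ s, P x → e x ∈ s ∧ Q (e x) ∧ e (e x) = x)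
    (hQ : ∀ x ∈ s, Q x → e x ∈ s ∧ P (e x) ∧ e (e x) = x) (hPQ : ∀ x ∈ s, P x → ¬Q x) :
    ∑ x ∈ s, f x = ∑ x ∈ s with P x, (f x + f (e x)) + ∑ x ∈ s with ¬P x ∧ ¬Q x, f x := by
  have hnotP : ∑ x ∈ s with ¬P x, f x =
      ∑ x ∈ s with Q x, f x + ∑ x ∈ s with ¬P x ∧ ¬Q x, f x := by
    rw [← sum_filter_add_sum_filter_not (s.filter (¬P ·)) Q, filter_filter, filter_filter]
    congr 2
    exact filter_congr fun x hx => ⟨fun h => h.2, fun h => ⟨fun hp => hPQ x hx hp h, h⟩⟩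
  have hQP : ∑ x ∈ s with Q x, f x = ∑ x ∈ s with P x, f (e x) := by
    refine sum_nbij' e e (fun x hx => ?_) (fun x hx => ?_) (fun x hx => ?_) (fun x hx => ?_)
      fun x hx => ?_
    all_goals simp only [mem_filter] at hx ⊢
    · exact ⟨(hQ x hx.1 hx.2).1, (hQ x hx.1 hx.2).2.1⟩
    · exact ⟨(hP x hx.1 hx.2).1, (hP x hx.1 hx.2).2.1⟩
    · exact (hQ x hx.1 hx.2).2.2
    · exact (hP x hx.1 hx.2).2.2
    · rw [(hQ x hx.1 hx.2).2.2]
  rw [sum_add_distrib, ← sum_filter_add_sum_filter_not s P, hnotP, hQP, add_assoc]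

section Fin

variable {M : Type*} [CommMonoid M] {n : ℕ}

lemma prod_fin_add_two (f : Fin (n + 2) → M) :
    ∏ i, f i = f 0 * (f 1 * ∏ j : Fin n, f j.succ.succ) := by
  rw [Fin.prod_univ_succ, Fin.prod_univ_succ, Fin.succ_zero_eq_one]

lemma succ_succ_ne_one (j : Fin n) : (j.succ.succ : Fin (n + 2)) ≠ 1 := by
  simp [Fin.ext_iff]

lemma prod_filter_ne_fin_add_two (f : Fin (n + 2) → M) (i : Fin (n + 2)) :
    ∏ j ∈ univ.filter (fun j => j ≠ i), f j =
      (if i = 0 then 1 else f 0) * ((if i = 1 then 1 else f 1) *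
        ∏ j : Fin n, if j.succ.succ = i then 1 else f j.succ.succ) := by
  rw [prod_filter, prod_fin_add_two]
  simp only [ne_eq, ite_not, eq_comm (b := i)]

end Fin

@[fun_prop]
lemma continuousAt_finsetProd {ι : Type*} (s : Finset ι) {f : ι → ℂ → ℂ} {c : ℂ}
    (h : ∀ i ∈ s, ContinuousAt (f i) c) : ContinuousAt (fun z => ∏ i ∈ s, f i z) c :=
  tendsto_finsetProd s h

lemma tendsto_sub_mul_of_continuousAt {F : ℂ → ℂ} {c : ℂ} (hF : ContinuousAt F c) :
    Tendsto (fun z => (z - c) * F z) (𝓝[≠] c) (𝓝 0) := by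
  have h : ContinuousAt (fun z => (z - c) * F z) c := by fun_prop
  simpa using h.tendsto.mono_left nhdsWithin_le_nhds

lemma tendsto_sub_mul_add_of_opposite_poles {F₁ F₂ g h : ℂ → ℂ} {c : ℂ}
    (hg : ∀ᶠ z in 𝓝[≠] c, g z = (z - c) * h z) (hF₁ : ContinuousAt F₁ c)
    (hF₂ : ContinuousAt F₂ c) (hh : ContinuousAt h c) (hhc : h c ≠ 0) (hF : F₁ c = F₂ c) :
    Tendsto (fun z => (z - c) * (F₁ z / g z + F₂ z / -g z)) (𝓝[≠] c) (𝓝 0) := by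
  have hcont : ContinuousAt (fun z => (F₁ z - F₂ z) / h z) c := (hF₁.sub hF₂).div hh hhc
  have hlim : Tendsto (fun z => (F₁ z - F₂ z) / h z) (𝓝[≠] c) (𝓝 0) := by
    simpa [hF] using hcont.tendsto.mono_left nhdsWithin_le_nhds
  refine hlim.congr' ?_
  filter_upwards [hg, self_mem_nhdsWithin] with z hz hzc
  rw [hz, div_neg, ← sub_eq_add_neg, ← sub_div, mul_div_assoc',
    mul_div_mul_left _ _ (sub_ne_zero.2 hzc)]

-- The exponent ranges of the four brackets of `Xcore` at `y = κ ^ p` (see `Xcore_zpow`).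
noncomputable def coreIco {M : Type*} [CommMonoid M] (f : ℤ → M) (p a b : ℤ) : M :=
  (∏ l ∈ Ico (-a) 0, f l) * (∏ l ∈ Ico (-b) 0, f l) * (∏ l ∈ Ico (p - b) (p - b + a), f l) *
    ∏ l ∈ Ico (-p - a) (-p - a + b), f l

section CoreIco

variable {M : Type*} [CommMonoid M] (f : ℤ → M) {p a b : ℤ}

lemma coreIco_comm : coreIco f p a b = coreIco f (-p) b a := by
  simp only [coreIco, neg_neg]
  ac_rfl

lemma coreIco_swap (ha : 0 ≤ a) (hb : 0 ≤ b) (ha' : 0 ≤ b - p) (hb' : 0 ≤ a + p) :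
    coreIco f p a b = coreIco f p (b - p) (a + p) := by
  have h₁ := prod_Ico_mul_prod_Ico_swap f (x := p - b) (y := p - b + a) (u := -b) (v := 0)
    (by omega) (by omega) (by omega) (by omega)
  have h₂ := prod_Ico_mul_prod_Ico_swap f (x := -p - a) (y := -p - a + b) (u := -a) (v := 0)
    (by omega) (by omega) (by omega) (by omega)
  calc coreIco f p a b
      = ((∏ l ∈ Ico (p - b) (p - b + a), f l) * ∏ l ∈ Ico (-b) 0, f l) *
          ((∏ l ∈ Ico (-p - a) (-p - a + b), f l) * ∏ l ∈ Ico (-a) 0, f l) := by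
        simp only [coreIco]; ac_rfl
    _ = coreIco f p (b - p) (a + p) := by
        rw [h₁, h₂]; simp only [coreIco]; ring_nf; ac_rfl

lemma coreIco_update_one (hA : 0 ∉ Ico (p - b) (p - b + a)) (hB : 0 ∉ Ico (-p - a) (-p - a + b)) :
    coreIco (Function.update f 0 1) p a b = coreIco f p a b := by
  have h0 (c : ℤ) : 0 ∉ Ico c 0 := by simp
  simp only [coreIco, prod_update_of_notMem hA, prod_update_of_notMem hB,
    prod_update_of_notMem (h0 _)]

end CoreIco

noncomputable def brFactor (κ w : ℂ) (l : ℤ) : ℂ := κ ^ l * w - κ ^ (-l) * w⁻¹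

section Bracket

variable {κ : ℂ}

lemma br_eq_prod_brFactor (κ ζ : ℂ) (m : ℕ) : br κ ζ m = ∏ l ∈ range m, brFactor κ ζ l := by
  simp [br, brFactor]

lemma brFactor_zpow_mul (hκ : κ ≠ 0) (s l : ℤ) (w : ℂ) :
    brFactor κ (κ ^ s * w) l = brFactor κ w (s + l) := by
  simp only [brFactor, mul_inv, ← zpow_neg, zpow_add₀ hκ, neg_add]
  ring

lemma brFactor_inv (κ w : ℂ) (l : ℤ) : brFactor κ w⁻¹ l = -brFactor κ w (-l) := by
  simp only [brFactor, inv_inv, neg_neg]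
  ring

lemma br_succ (κ ζ : ℂ) (m : ℕ) : br κ ζ (m + 1) = br κ ζ m * brFactor κ ζ m := by
  rw [br_eq_prod_brFactor, prod_range_succ, ← br_eq_prod_brFactor]

lemma br_zpow_mul (hκ : κ ≠ 0) (s : ℤ) (w : ℂ) (m : ℕ) :
    br κ (κ ^ s * w) m = ∏ l ∈ Ico s (s + m), brFactor κ w l := by
  induction m with
  | zero => simp [br]
  | succ m ih =>
    rw [br_succ, ih, brFactor_zpow_mul hκ, Nat.cast_succ, ← add_assoc,
      prod_Ico_mul_eq_prod_Ico_add_one (by omega)]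

lemma br_mul_self (hκ : κ ≠ 0) (w : ℂ) (m : ℕ) :
    br κ (κ * w) m = (-1) ^ m * ∏ l ∈ Ico (-(m : ℤ)) 0, brFactor κ w⁻¹ l := by
  induction m with
  | zero => simp [br]
  | succ m ih =>
    have hbot : ∏ l ∈ Ico (-((m + 1 : ℕ) : ℤ)) 0, brFactor κ w⁻¹ l =
        brFactor κ w⁻¹ (-(m + 1)) * ∏ l ∈ Ico (-(m : ℤ)) 0, brFactor κ w⁻¹ l := by
      rw [← insert_Ico_add_one_left_eq_Ico (by omega), prod_insert (by simp)]
      push_cast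
      ring_nf
    have htop := brFactor_zpow_mul hκ 1 m w
    rw [zpow_one] at htop
    rw [br_succ, ih, hbot, htop, brFactor_inv, neg_neg, add_comm (1 : ℤ)]
    ring

lemma sq_zpow_comm (κ : ℂ) (l : ℤ) : (κ ^ 2) ^ l = (κ ^ l) ^ 2 := by
  rw [← zpow_natCast, ← zpow_mul, zpow_mul', zpow_natCast]

lemma brFactor_eq_zero (hκ : κ ≠ 0) {w : ℂ} (hw : w ≠ 0) {l : ℤ} (h : brFactor κ w l = 0) :
    w ^ 2 = (κ ^ 2) ^ (-l) := by
  have huv : κ ^ l * κ ^ (-l) = 1 := by rw [← zpow_add₀ hκ, add_neg_cancel, zpow_zero]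
  rw [brFactor] at h
  rw [sq_zpow_comm]
  linear_combination (κ ^ (-l) * w) * h - w ^ 2 * huv + (κ ^ (-l)) ^ 2 * mul_inv_cancel₀ hw

lemma sq_ne_zpow_zpow_mul {w : ℂ} (hκ : κ ≠ 0) (hw : ∀ l : ℤ, w ^ 2 ≠ (κ ^ 2) ^ l) (s l : ℤ) :
    (κ ^ s * w) ^ 2 ≠ (κ ^ 2) ^ l := by
  intro h
  apply hw (l - s)
  rw [zpow_sub₀ (pow_ne_zero 2 hκ), ← h, mul_pow, ← sq_zpow_comm]
  field_simp

lemma br_ne_zero (hκ : κ ≠ 0) {w : ℂ} (hw0 : w ≠ 0) (hw : ∀ l : ℤ, w ^ 2 ≠ (κ ^ 2) ^ l)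
    (m : ℕ) : br κ w m ≠ 0 := by
  rw [br_eq_prod_brFactor]
  exact prod_ne_zero_iff.2 fun l _ h => hw _ (brFactor_eq_zero hκ hw0 h)

lemma zpow_sq_ne_one (hq : ∀ m : ℕ, 1 ≤ m → κ ^ (2 * m) ≠ 1) {l : ℤ} (hl : l ≠ 0) :
    (κ ^ 2) ^ l ≠ 1 := by
  have hpos := hq _ (Int.natAbs_pos.2 hl)
  rcases Int.natAbs_eq l with h | h <;> rw [h]
  · rwa [zpow_natCast, ← pow_mul]
  · rwa [zpow_neg, zpow_natCast, ← pow_mul, inv_ne_one]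

lemma brFactor_one_ne_zero (hκ : κ ≠ 0) (hq : ∀ m : ℕ, 1 ≤ m → κ ^ (2 * m) ≠ 1) {l : ℤ}
    (hl : l ≠ 0) : brFactor κ 1 l ≠ 0 := fun h =>
  zpow_sq_ne_one hq (neg_ne_zero.2 hl) (by simpa using (brFactor_eq_zero hκ one_ne_zero h).symm)

lemma br_zpow_mul_mul_br_swap (hκ : κ ≠ 0) {p : ℤ} {a b a' b' : ℕ} (ha' : (a' : ℤ) = b - p)
    (hb' : (b' : ℤ) = a + p) (w : ℂ) :
    br κ (κ ^ p * w) a * br κ w b = br κ (κ ^ p * w) a' * br κ w b' := by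
  have h0 (m : ℕ) : br κ w m = ∏ l ∈ Ico 0 (m : ℤ), brFactor κ w l := by
    simpa using br_zpow_mul hκ 0 w m
  rw [h0, h0, br_zpow_mul hκ, br_zpow_mul hκ, ha', hb', add_sub_cancel,
    prod_Ico_mul_prod_Ico_swap _ (by omega) (by omega) (by omega) (by omega)]
  ring_nf

lemma br_zpow_mul_ne_zero (hκ : κ ≠ 0) {v : ℂ} (hv0 : v ≠ 0) (hv : ∀ l : ℤ, v ^ 2 ≠ (κ ^ 2) ^ l)
    (s : ℤ) (m : ℕ) : br κ (κ ^ s * v) m ≠ 0 :=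
  br_ne_zero hκ (mul_ne_zero (zpow_ne_zero s hκ) hv0) (sq_ne_zpow_zpow_mul hκ hv s) m

lemma sq_inv_ne_zpow {v : ℂ} (hv : ∀ l : ℤ, v ^ 2 ≠ (κ ^ 2) ^ l) (l : ℤ) : v⁻¹ ^ 2 ≠ (κ ^ 2) ^ l :=
  fun h => hv (-l) (by rw [zpow_neg, ← h, inv_pow, inv_inv])

lemma update_brFactor_one_ne_zero (hκ : κ ≠ 0) (hq : ∀ m : ℕ, 1 ≤ m → κ ^ (2 * m) ≠ 1)
    (l : ℤ) : Function.update (brFactor κ 1) 0 1 l ≠ 0 := by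
  rcases eq_or_ne l 0 with rfl | hl
  · simp
  · rw [Function.update_of_ne hl]
    exact brFactor_one_ne_zero hκ hq hl

lemma coreIco_update_brFactor_one_ne_zero (hκ : κ ≠ 0)
    (hq : ∀ m : ℕ, 1 ≤ m → κ ^ (2 * m) ≠ 1) (p a b : ℤ) :
    coreIco (Function.update (brFactor κ 1) 0 1) p a b ≠ 0 := by
  have h := fun (s : Finset ℤ) => prod_ne_zero_iff.2 fun l (_ : l ∈ s) =>
    update_brFactor_one_ne_zero hκ hq l
  simp only [coreIco]
  exact mul_ne_zero (mul_ne_zero (mul_ne_zero (h _) (h _)) (h _)) (h _)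

lemma brFactor_zpow_neg_mul_div (hκ : κ ≠ 0) {p : ℤ} {x z : ℂ} (hx : x ≠ 0) (hz : z ≠ 0) :
    brFactor κ (κ ^ (-p) * (z / x)) 0 = (z - κ ^ p * x) * ((z + κ ^ p * x) / (κ ^ p * x * z)) := by
  have := zpow_ne_zero p hκ
  simp only [brFactor, neg_zero, zpow_zero, one_mul, zpow_neg]
  field_simp
  ring

@[fun_prop]
lemma ContinuousAt.br {g : ℂ → ℂ} {c : ℂ} (hg : ContinuousAt g c) (hg0 : g c ≠ 0) (κ : ℂ)
    (m : ℕ) : ContinuousAt (fun z => br κ (g z) m) c := by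
  unfold _root_.br
  fun_prop (disch := exact hg0)

end Bracket

noncomputable def Xprod (κ μ : ℂ) {n : ℕ} (k : Fin n → ℕ) (σ τ : Fin n → ℂ) : ℂ :=
  (∏ i, br κ (κ * μ) (k i)) *
  (∏ i, ∏ j ∈ univ.filter (fun j => j ≠ i), br κ (μ⁻¹ * κ ^ (-(k j : ℤ)) * (σ i / σ j)) (k i)) *
  ∏ a, ∏ j, br κ (μ * σ j / τ a) (k j)

lemma Xsum_eq_div (κ ρ : ℂ) {n : ℕ} (k : Fin n → ℕ) (σ τ : Fin n → ℂ) :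
    Xsum κ ρ k σ τ = Xprod κ ρ k σ τ / Xprod κ 1 k σ τ := by
  simp only [Xsum, Xprod, prod_div_distrib, inv_one, one_mul, mul_one, mul_div_mul_comm]

noncomputable def Xcore (κ μ : ℂ) (a b : ℕ) (y : ℂ) : ℂ :=
  br κ (κ * μ) a * br κ (κ * μ) b * br κ (μ⁻¹ * κ ^ (-(b : ℤ)) * y) a *
    br κ (μ⁻¹ * κ ^ (-(a : ℤ)) * y⁻¹) b

noncomputable def Xcross (κ μ : ℂ) {n : ℕ} (a b : ℕ) (r : Fin n → ℕ) (σ τ : Fin (n + 2) → ℂ)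
    (z : ℂ) : ℂ :=
  (∏ j : Fin n,
    br κ (μ⁻¹ * κ ^ (-(r j : ℤ)) * (z / σ j.succ.succ)) a *
      br κ (μ⁻¹ * κ ^ (-(r j : ℤ)) * (σ 1 / σ j.succ.succ)) b *
    (br κ (μ⁻¹ * κ ^ (-(a : ℤ)) * (σ j.succ.succ / z)) (r j) *
      br κ (μ⁻¹ * κ ^ (-(b : ℤ)) * (σ j.succ.succ / σ 1)) (r j))) *
  ∏ t, br κ (μ * z / τ t) a * br κ (μ * σ 1 / τ t) b

noncomputable def Xrest (κ μ : ℂ) {n : ℕ} (r : Fin n → ℕ) (σ τ : Fin (n + 2) → ℂ) : ℂ :=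
  (∏ i : Fin n, br κ (κ * μ) (r i)) *
  (∏ i : Fin n, ∏ j ∈ univ.filter (fun j => j ≠ i),
    br κ (μ⁻¹ * κ ^ (-(r j : ℤ)) * (σ i.succ.succ / σ j.succ.succ)) (r i)) *
  ∏ t, ∏ j : Fin n, br κ (μ * σ j.succ.succ / τ t) (r j)

lemma Xprod_update_zero (κ μ : ℂ) {n : ℕ} (k : Fin (n + 2) → ℕ) (σ τ : Fin (n + 2) → ℂ)
    (z : ℂ) :
    Xprod κ μ k (Function.update σ 0 z) τ =
      Xcore κ μ (k 0) (k 1) (z / σ 1) * Xcross κ μ (k 0) (k 1) (fun j => k j.succ.succ) σ τ z *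
        Xrest κ μ (fun j => k j.succ.succ) σ τ := by
  simp only [Xprod, Xcore, Xcross, Xrest, prod_fin_add_two, prod_filter_ne_fin_add_two]
  simp only [↓reduceIte, zero_ne_one, one_ne_zero, ne_eq, not_false_eq_true, ite_not,
    Function.update_self, Function.update_of_ne, Fin.succ_ne_zero, succ_succ_ne_one, Fin.succ_inj,
    zpow_neg, zpow_natCast, one_mul, prod_mul_distrib, inv_div, prod_filter]
  ring

-- `Xcore κ 1 a b` with the factor of its third bracket that vanishes at `y = κ ^ p` set to `1`.
noncomputable def XcoreReg (κ : ℂ) (p : ℤ) (a b : ℕ) (y : ℂ) : ℂ :=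
  br κ κ a * br κ κ b *
    (∏ l ∈ Ico (p - b) (p - b + a), Function.update (brFactor κ (κ ^ (-p) * y)) 0 1 l) *
    br κ (κ ^ (-(a : ℤ)) * y⁻¹) b

section Core

variable {κ : ℂ} {p : ℤ} {a b : ℕ}

lemma Xcore_comm (κ μ : ℂ) (a b : ℕ) (y : ℂ) : Xcore κ μ a b y = Xcore κ μ b a y⁻¹ := by
  simp only [Xcore, inv_inv]
  ring

lemma Xcore_zpow (hκ : κ ≠ 0) (μ : ℂ) :
    Xcore κ μ a b (κ ^ p) = (-1) ^ (a + b) * coreIco (brFactor κ μ⁻¹) p a b := by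
  rw [Xcore, br_mul_self hκ, br_mul_self hκ,
    show μ⁻¹ * κ ^ (-(b : ℤ)) * κ ^ p = κ ^ (p - b) * μ⁻¹ by
      simp only [zpow_sub₀ hκ, zpow_neg]; ring,
    show μ⁻¹ * κ ^ (-(a : ℤ)) * (κ ^ p)⁻¹ = κ ^ (-p - a : ℤ) * μ⁻¹ by
      simp only [zpow_sub₀ hκ, zpow_neg]; ring,
    br_zpow_mul hκ, br_zpow_mul hκ, coreIco]
  ring

lemma Xcore_one_eq_mul_XcoreReg (hκ : κ ≠ 0) (hA : (0 : ℤ) ∈ Ico (p - b) (p - b + a)) (y : ℂ) :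
    Xcore κ 1 a b y = brFactor κ (κ ^ (-p) * y) 0 * XcoreReg κ p a b y := by
  rw [Xcore, XcoreReg, inv_one, one_mul, one_mul, mul_one,
    show κ ^ (-(b : ℤ)) * y = κ ^ (p - b) * (κ ^ (-p) * y) by
      rw [← mul_assoc, ← zpow_add₀ hκ]; ring_nf,
    br_zpow_mul hκ, prod_eq_mul_prod_update_one hA]
  ring

lemma Xcore_one_eq_neg_mul_XcoreReg (hκ : κ ≠ 0) (hB : (0 : ℤ) ∈ Ico (-p - a) (-p - a + b))
    (y : ℂ) :
    Xcore κ 1 a b y = -brFactor κ (κ ^ (-p) * y) 0 * XcoreReg κ (-p) b a y⁻¹ := by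
  have h := brFactor_inv κ (κ ^ (-p) * y) 0
  rw [mul_inv, zpow_neg, inv_inv, neg_zero, ← zpow_neg] at h
  rw [Xcore_comm, Xcore_one_eq_mul_XcoreReg hκ hB, neg_neg, h]

lemma XcoreReg_zpow (hκ : κ ≠ 0) (hA : (0 : ℤ) ∈ Ico (p - b) (p - b + a)) :
    XcoreReg κ p a b (κ ^ p) =
      (-1) ^ (a + b) * coreIco (Function.update (brFactor κ 1) 0 1) p a b := by
  have hbr (m : ℕ) : br κ κ m = (-1) ^ m * ∏ l ∈ Ico (-(m : ℤ)) 0, brFactor κ 1 l := by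
    simpa using br_mul_self hκ 1 m
  have hB : (0 : ℤ) ∉ Ico (-p - a) (-p - a + b) := by
    simp only [mem_Ico] at hA ⊢
    omega
  rw [XcoreReg, hbr, hbr, zpow_neg, inv_mul_cancel₀ (zpow_ne_zero p hκ),
    show κ ^ (-(a : ℤ)) * (κ ^ p)⁻¹ = κ ^ (-p - a : ℤ) * 1 by
      simp only [zpow_sub₀ hκ, zpow_neg]; ring,
    br_zpow_mul hκ, coreIco, prod_update_of_notMem hB,
    prod_update_of_notMem (s := Ico (-(a : ℤ)) 0) (by simp),
    prod_update_of_notMem (s := Ico (-(b : ℤ)) 0) (by simp)]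
  ring

lemma XcoreReg_zpow_ne_zero (hκ : κ ≠ 0) (hq : ∀ m : ℕ, 1 ≤ m → κ ^ (2 * m) ≠ 1)
    (hA : (0 : ℤ) ∈ Ico (p - b) (p - b + a)) : XcoreReg κ p a b (κ ^ p) ≠ 0 := by
  rw [XcoreReg_zpow hκ hA]
  exact mul_ne_zero (pow_ne_zero _ (by norm_num)) (coreIco_update_brFactor_one_ne_zero hκ hq _ _ _)

lemma Xcore_one_zpow_ne_zero (hκ : κ ≠ 0) (hq : ∀ m : ℕ, 1 ≤ m → κ ^ (2 * m) ≠ 1)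
    (hA : (0 : ℤ) ∉ Ico (p - b) (p - b + a)) (hB : (0 : ℤ) ∉ Ico (-p - a) (-p - a + b)) :
    Xcore κ 1 a b (κ ^ p) ≠ 0 := by
  rw [Xcore_zpow hκ, inv_one, ← coreIco_update_one _ hA hB]
  exact mul_ne_zero (pow_ne_zero _ (by norm_num)) (coreIco_update_brFactor_one_ne_zero hκ hq _ _ _)

lemma Xcore_zpow_swap (hκ : κ ≠ 0) {a' b' : ℕ} (ha' : (a' : ℤ) = b - p)
    (hb' : (b' : ℤ) = a + p) (μ : ℂ) : Xcore κ μ a b (κ ^ p) = Xcore κ μ a' b' (κ ^ p) := by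
  rw [Xcore_zpow hκ, Xcore_zpow hκ, coreIco_swap _ (by omega) (by omega) (by omega) (by omega),
    ← ha', ← hb', show a + b = a' + b' by omega]

lemma XcoreReg_zpow_swap {a' b' : ℕ} (hκ : κ ≠ 0)
    (hA : (0 : ℤ) ∈ Ico (p - b) (p - b + a)) (ha' : (a' : ℤ) = b - p) (hb' : (b' : ℤ) = a + p) :
    XcoreReg κ p a b (κ ^ p) = XcoreReg κ (-p) b' a' (κ ^ p)⁻¹ := by
  have hB : (0 : ℤ) ∈ Ico (-p - a') (-p - a' + b') := by
    simp only [mem_Ico] at hA ⊢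
    omega
  rw [← zpow_neg, XcoreReg_zpow hκ hA, XcoreReg_zpow hκ hB, coreIco_comm _ (p := -p), neg_neg,
    coreIco_swap _ (by omega) (by omega) (by omega) (by omega), ← ha', ← hb',
    show a + b = b' + a' by omega]

lemma continuousAt_Xcore {μ y₀ : ℂ} (hκ : κ ≠ 0) (hμ : μ ≠ 0) (hy₀ : y₀ ≠ 0) :
    ContinuousAt (Xcore κ μ a b) y₀ := by
  unfold Xcore
  fun_prop (disch := simp [*])

lemma continuousAt_XcoreReg {y₀ : ℂ} (hκ : κ ≠ 0) (hy₀ : y₀ ≠ 0) :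
    ContinuousAt (XcoreReg κ p a b) y₀ := by
  have hreg (l : ℤ) :
      ContinuousAt (fun y => Function.update (brFactor κ (κ ^ (-p) * y)) 0 1 l) y₀ := by
    rcases eq_or_ne l 0 with rfl | hl
    · simp only [Function.update_self]
      exact continuousAt_const
    · simp only [Function.update_of_ne hl, brFactor]
      fun_prop (disch := exact mul_ne_zero (zpow_ne_zero _ hκ) hy₀)
  unfold XcoreReg
  fun_prop (disch := simp [*])

end Core

section Cross

variable {κ : ℂ} {n : ℕ} {p : ℤ} {a b a' b' : ℕ}

lemma Xcross_swap (hκ : κ ≠ 0) (ha' : (a' : ℤ) = b - p) (hb' : (b' : ℤ) = a + p) (μ : ℂ)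
    (r : Fin n → ℕ) (σ τ : Fin (n + 2) → ℂ) :
    Xcross κ μ a b r σ τ (κ ^ p * σ 1) = Xcross κ μ a' b' r σ τ (κ ^ p * σ 1) := by
  have hj (e : ℤ) (x : ℂ) :
      μ⁻¹ * κ ^ e * (κ ^ p * σ 1 / x) = κ ^ p * (μ⁻¹ * κ ^ e * (σ 1 / x)) := by
    ring
  have hi (e : ℤ) (x : ℂ) : μ⁻¹ * κ ^ e * (x / (κ ^ p * σ 1)) = μ⁻¹ * κ ^ (e - p) * (x / σ 1) := by
    rw [zpow_sub₀ hκ]; field_simp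
  have ht (t : Fin (n + 2)) : μ * (κ ^ p * σ 1) / τ t = κ ^ p * (μ * σ 1 / τ t) := by ring
  unfold Xcross
  congr 1
  · refine prod_congr rfl fun j _ => ?_
    rw [hj, hi, hi, br_zpow_mul_mul_br_swap hκ ha' hb', show -(a' : ℤ) - p = -b by omega,
      show -(a : ℤ) - p = -b' by omega]
    ring
  · exact prod_congr rfl fun t _ => by rw [ht, br_zpow_mul_mul_br_swap hκ ha' hb']

lemma Xcross_one_ne_zero (hκ : κ ≠ 0) {r : Fin n → ℕ} {σ τ : Fin (n + 2) → ℂ} (hσ1 : σ 1 ≠ 0)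
    (hσ : ∀ j : Fin n, σ j.succ.succ ≠ 0) (hτ : ∀ t, τ t ≠ 0)
    (h1j : ∀ (j : Fin n) (l : ℤ), (σ 1 / σ j.succ.succ) ^ 2 ≠ (κ ^ 2) ^ l)
    (h1τ : ∀ t (l : ℤ), (σ 1 / τ t) ^ 2 ≠ (κ ^ 2) ^ l) :
    Xcross κ 1 a b r σ τ (κ ^ p * σ 1) ≠ 0 := by
  have hj (e : ℤ) (x : ℂ) : κ ^ e * (κ ^ p * σ 1 / x) = κ ^ (p + e) * (σ 1 / x) := by
    rw [zpow_add₀ hκ]; ring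
  have hi (e : ℤ) (x : ℂ) : κ ^ e * (x / (κ ^ p * σ 1)) = κ ^ (e - p) * (σ 1 / x)⁻¹ := by
    rw [zpow_sub₀ hκ]; field_simp
  have ht (t : Fin (n + 2)) : κ ^ p * σ 1 / τ t = κ ^ p * (σ 1 / τ t) := by ring
  unfold Xcross
  simp only [inv_one, one_mul, hj, hi, ht]
  refine mul_ne_zero (prod_ne_zero_iff.2 fun j _ => ?_) (prod_ne_zero_iff.2 fun t _ => ?_)
  · have hv0 : σ 1 / σ j.succ.succ ≠ 0 := div_ne_zero hσ1 (hσ j)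
    have hv := br_zpow_mul_ne_zero hκ hv0 (h1j j)
    have hv' := br_zpow_mul_ne_zero hκ (inv_ne_zero hv0) (sq_inv_ne_zpow (h1j j))
    rw [← inv_div (σ 1)]
    exact mul_ne_zero (mul_ne_zero (hv _ _) (hv _ _)) (mul_ne_zero (hv' _ _) (hv' _ _))
  · exact mul_ne_zero (br_zpow_mul_ne_zero hκ (div_ne_zero hσ1 (hτ t)) (h1τ t) _ _)
      (br_ne_zero hκ (div_ne_zero hσ1 (hτ t)) (h1τ t) _)

lemma continuousAt_Xcross {μ : ℂ} (hκ : κ ≠ 0) (hμ : μ ≠ 0) {r : Fin n → ℕ} {σ τ : Fin (n + 2) → ℂ}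
    (hσ : ∀ j : Fin n, σ j.succ.succ ≠ 0) (hτ : ∀ t, τ t ≠ 0) {c : ℂ} (hc : c ≠ 0) :
    ContinuousAt (Xcross κ μ a b r σ τ) c := by
  unfold Xcross
  fun_prop (disch := simp [*])

end Cross

-- `Xsum` with its simple pole divided out: `D` is the rest of the denominator of `Xcore`.
noncomputable def Xreg (κ ρ : ℂ) (D : ℂ → ℂ) {n : ℕ} (k : Fin (n + 2) → ℕ)
    (σ τ : Fin (n + 2) → ℂ) (z : ℂ) : ℂ :=
  Xcore κ ρ (k 0) (k 1) (z / σ 1) * Xcross κ ρ (k 0) (k 1) (fun j => k j.succ.succ) σ τ z /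
      (D (z / σ 1) * Xcross κ 1 (k 0) (k 1) (fun j => k j.succ.succ) σ τ z) *
    (Xrest κ ρ (fun j => k j.succ.succ) σ τ / Xrest κ 1 (fun j => k j.succ.succ) σ τ)

section Regular

variable {κ ρ : ℂ} {n : ℕ} {p : ℤ} {k k' : Fin (n + 2) → ℕ} {σ τ : Fin (n + 2) → ℂ}

lemma Xsum_update_eq_Xreg_div {G D : ℂ → ℂ} (hD : ∀ y, Xcore κ 1 (k 0) (k 1) y = G y * D y)
    (z : ℂ) : Xsum κ ρ k (Function.update σ 0 z) τ = Xreg κ ρ D k σ τ z / G (z / σ 1) := by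
  rw [Xsum_eq_div, Xprod_update_zero, Xprod_update_zero, hD, Xreg]
  simp only [div_eq_mul_inv, mul_inv]
  ring

lemma continuousAt_Xreg (hκ : κ ≠ 0) (hρ : ρ ≠ 0) (hσ1 : σ 1 ≠ 0)
    (hσ : ∀ j : Fin n, σ j.succ.succ ≠ 0) (hτ : ∀ t, τ t ≠ 0)
    (h1j : ∀ (j : Fin n) (l : ℤ), (σ 1 / σ j.succ.succ) ^ 2 ≠ (κ ^ 2) ^ l)
    (h1τ : ∀ t (l : ℤ), (σ 1 / τ t) ^ 2 ≠ (κ ^ 2) ^ l) {D : ℂ → ℂ}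
    (hD : ContinuousAt D (κ ^ p)) (hD0 : D (κ ^ p) ≠ 0) :
    ContinuousAt (Xreg κ ρ D k σ τ) (κ ^ p * σ 1) := by
  have hc : κ ^ p * σ 1 ≠ 0 := mul_ne_zero (zpow_ne_zero p hκ) hσ1
  have hy : ContinuousAt (fun z => z / σ 1) (κ ^ p * σ 1) := by fun_prop
  have hyc : κ ^ p * σ 1 / σ 1 = κ ^ p := mul_div_cancel_right₀ _ hσ1
  refine ((((continuousAt_Xcore hκ hρ (zpow_ne_zero p hκ)).comp_of_eq hy hyc).mul
    (continuousAt_Xcross hκ hρ hσ hτ hc)).div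
    ((hD.comp_of_eq hy hyc).mul (continuousAt_Xcross hκ one_ne_zero hσ hτ hc)) ?_).mul
    continuousAt_const
  simp only [Pi.mul_apply, Function.comp_apply, hyc]
  exact mul_ne_zero hD0 (Xcross_one_ne_zero hκ hσ1 hσ hτ h1j h1τ)

lemma Xreg_swap (hκ : κ ≠ 0) (hσ1 : σ 1 ≠ 0) {D D' : ℂ → ℂ} (hD : D (κ ^ p) = D' (κ ^ p))
    (ha' : (k' 0 : ℤ) = k 1 - p) (hb' : (k' 1 : ℤ) = k 0 + p)
    (htail : ∀ j : Fin n, k' j.succ.succ = k j.succ.succ) :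
    Xreg κ ρ D k σ τ (κ ^ p * σ 1) = Xreg κ ρ D' k' σ τ (κ ^ p * σ 1) := by
  simp only [Xreg, mul_div_cancel_right₀ _ hσ1, htail, hD, Xcore_zpow_swap hκ ha' hb',
    Xcross_swap hκ ha' hb']

end Regular

noncomputable def diagSwap (p : ℤ) {n : ℕ} (k : Fin (n + 2) → ℕ) : Fin (n + 2) → ℕ :=
  Fin.cons ((k 1 : ℤ) - p).toNat (Fin.cons ((k 0 : ℤ) + p).toNat fun j => k j.succ.succ)

section DiagSwap

variable {n : ℕ} {p : ℤ} {k : Fin (n + 2) → ℕ}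

@[simp] lemma diagSwap_zero : diagSwap p k 0 = ((k 1 : ℤ) - p).toNat := rfl

@[simp] lemma diagSwap_one : diagSwap p k 1 = ((k 0 : ℤ) + p).toNat := rfl

@[simp] lemma diagSwap_succ_succ (j : Fin n) : diagSwap p k j.succ.succ = k j.succ.succ := rfl

lemma sum_diagSwap (h₁ : p ≤ k 1) (h₀ : -p ≤ k 0) : ∑ i, diagSwap p k i = ∑ i, k i := by
  simp only [Fin.sum_univ_succ, Fin.succ_zero_eq_one, diagSwap_zero, diagSwap_one,
    diagSwap_succ_succ]
  omega

lemma diagSwap_diagSwap (h₁ : p ≤ k 1) (h₀ : -p ≤ k 0) : diagSwap p (diagSwap p k) = k := by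
  ext i
  refine Fin.cases ?_ (Fin.cases ?_ fun j => ?_) i <;>
    simp only [Fin.succ_zero_eq_one, diagSwap_zero, diagSwap_one, diagSwap_succ_succ,
      Int.ofNat_toNat] <;> omega

lemma diagSwap_mem_antidiagonalTuple {K : ℕ} (hk : k ∈ Nat.antidiagonalTuple (n + 2) K)
    (h₁ : p ≤ k 1) (h₀ : -p ≤ k 0) : diagSwap p k ∈ Nat.antidiagonalTuple (n + 2) K := by
  rw [Nat.mem_antidiagonalTuple] at hk ⊢
  exact (sum_diagSwap h₁ h₀).trans hk

lemma diagSwap_of_mem_Ico_left {K : ℕ} (hk : k ∈ Nat.antidiagonalTuple (n + 2) K)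
    (h : (0 : ℤ) ∈ Ico (p - k 1) (p - k 1 + k 0)) :
    diagSwap p k ∈ Nat.antidiagonalTuple (n + 2) K ∧
      (0 : ℤ) ∈ Ico (-p - diagSwap p k 0) (-p - diagSwap p k 0 + diagSwap p k 1) ∧
      diagSwap p (diagSwap p k) = k := by
  simp only [mem_Ico, diagSwap_zero, diagSwap_one] at h ⊢
  exact ⟨diagSwap_mem_antidiagonalTuple hk (by omega) (by omega), by omega,
    diagSwap_diagSwap (by omega) (by omega)⟩

lemma diagSwap_of_mem_Ico_right {K : ℕ} (hk : k ∈ Nat.antidiagonalTuple (n + 2) K)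
    (h : (0 : ℤ) ∈ Ico (-p - k 0) (-p - k 0 + k 1)) :
    diagSwap p k ∈ Nat.antidiagonalTuple (n + 2) K ∧
      (0 : ℤ) ∈ Ico (p - diagSwap p k 1) (p - diagSwap p k 1 + diagSwap p k 0) ∧
      diagSwap p (diagSwap p k) = k := by
  simp only [mem_Ico, diagSwap_zero, diagSwap_one] at h ⊢
  exact ⟨diagSwap_mem_antidiagonalTuple hk (by omega) (by omega), by omega,
    diagSwap_diagSwap (by omega) (by omega)⟩

end DiagSwap

section Residues

variable {κ ρ : ℂ} {n : ℕ} {p : ℤ} {k : Fin (n + 2) → ℕ} {σ τ : Fin (n + 2) → ℂ}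

theorem tendsto_sub_mul_Xsum_of_notMem (hκ : κ ≠ 0) (hρ : ρ ≠ 0)
    (hq : ∀ m : ℕ, 1 ≤ m → κ ^ (2 * m) ≠ 1) (hσ1 : σ 1 ≠ 0)
    (hσ : ∀ j : Fin n, σ j.succ.succ ≠ 0) (hτ : ∀ t, τ t ≠ 0)
    (h1j : ∀ (j : Fin n) (l : ℤ), (σ 1 / σ j.succ.succ) ^ 2 ≠ (κ ^ 2) ^ l)
    (h1τ : ∀ t (l : ℤ), (σ 1 / τ t) ^ 2 ≠ (κ ^ 2) ^ l)
    (hA : (0 : ℤ) ∉ Ico (p - k 1) (p - k 1 + k 0))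
    (hB : (0 : ℤ) ∉ Ico (-p - k 0) (-p - k 0 + k 1)) :
    Tendsto (fun z => (z - κ ^ p * σ 1) * Xsum κ ρ k (Function.update σ 0 z) τ)
      (𝓝[≠] (κ ^ p * σ 1)) (𝓝 0) := by
  simp_rw [Xsum_update_eq_Xreg_div (G := fun _ => 1) fun y => (one_mul (Xcore κ 1 _ _ y)).symm,
    div_one]
  exact tendsto_sub_mul_of_continuousAt (continuousAt_Xreg hκ hρ hσ1 hσ hτ h1j h1τ
    (continuousAt_Xcore hκ one_ne_zero (zpow_ne_zero p hκ)) (Xcore_one_zpow_ne_zero hκ hq hA hB))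

theorem tendsto_sub_mul_Xsum_add_Xsum_diagSwap (hκ : κ ≠ 0) (hρ : ρ ≠ 0)
    (hq : ∀ m : ℕ, 1 ≤ m → κ ^ (2 * m) ≠ 1) (hσ1 : σ 1 ≠ 0)
    (hσ : ∀ j : Fin n, σ j.succ.succ ≠ 0) (hτ : ∀ t, τ t ≠ 0)
    (h1j : ∀ (j : Fin n) (l : ℤ), (σ 1 / σ j.succ.succ) ^ 2 ≠ (κ ^ 2) ^ l)
    (h1τ : ∀ t (l : ℤ), (σ 1 / τ t) ^ 2 ≠ (κ ^ 2) ^ l)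
    (hA : (0 : ℤ) ∈ Ico (p - k 1) (p - k 1 + k 0)) :
    Tendsto (fun z => (z - κ ^ p * σ 1) *
        (Xsum κ ρ k (Function.update σ 0 z) τ + Xsum κ ρ (diagSwap p k) (Function.update σ 0 z) τ))
      (𝓝[≠] (κ ^ p * σ 1)) (𝓝 0) := by
  have hA' := mem_Ico.1 hA
  have ha' : ((diagSwap p k 0 : ℕ) : ℤ) = k 1 - p := by rw [diagSwap_zero]; omega
  have hb' : ((diagSwap p k 1 : ℕ) : ℤ) = k 0 + p := by rw [diagSwap_one]; omega
  have hB : (0 : ℤ) ∈ Ico (-p - diagSwap p k 0) (-p - diagSwap p k 0 + diagSwap p k 1) := by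
    simp only [mem_Ico, ha', hb']
    omega
  have hp := zpow_ne_zero p hκ
  have hD0 := XcoreReg_zpow_ne_zero hκ hq hA
  have hD := XcoreReg_zpow_swap hκ hA ha' hb'
  simp_rw [Xsum_update_eq_Xreg_div (Xcore_one_eq_mul_XcoreReg hκ hA),
    Xsum_update_eq_Xreg_div (Xcore_one_eq_neg_mul_XcoreReg hκ hB)]
  have hc : κ ^ p * σ 1 ≠ 0 := mul_ne_zero hp hσ1
  refine tendsto_sub_mul_add_of_opposite_poles
    (h := fun z => (z + κ ^ p * σ 1) / (κ ^ p * σ 1 * z)) ?_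
    (continuousAt_Xreg hκ hρ hσ1 hσ hτ h1j h1τ (continuousAt_XcoreReg hκ hp) hD0)
    (continuousAt_Xreg hκ hρ hσ1 hσ hτ h1j h1τ
      ((continuousAt_XcoreReg hκ (inv_ne_zero hp)).comp (continuousAt_inv₀ hp)) (hD ▸ hD0))
    (by fun_prop (disch := exact mul_ne_zero hc hc)) ?_
    (Xreg_swap hκ hσ1 hD ha' hb' fun _ => rfl)
  · filter_upwards [(eventually_ne_nhds hc).filter_mono nhdsWithin_le_nhds] with z hz
    exact brFactor_zpow_neg_mul_div hκ hσ1 hz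
  · simpa using div_ne_zero (mul_ne_zero two_ne_zero hc) (mul_ne_zero hc hc)

end Residues

/-- The total residue of `∑_{|k|=K} X_k` at the diagonal `u_1 = q^p u_2` vanishes:
`(σ_1 − κ^p σ_2) ∑_{|k|=K} X_k → 0` as `σ_1 → κ^p σ_2`, i.e. the left-hand side of
the duality identity has no poles along the diagonals. -/
theorem X_sum_no_diagonal_pole (n K : ℕ) (p : ℤ) (κ ρ : ℂ)
    (hκ0 : κ ≠ 0) (hρ0 : ρ ≠ 0)
    (hκ : ∀ m : ℕ, 1 ≤ m → κ ^ (2 * m) ≠ 1)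
    (σ τ : Fin (n + 2) → ℂ) (hσ : ∀ i : Fin (n + 2), i ≠ 0 → σ i ≠ 0)
    (hτ : ∀ a, τ a ≠ 0)
    (hσσ : ∀ i j : Fin (n + 2), i ≠ 0 → j ≠ 0 → i < j →
      ∀ m : ℤ, (σ i) ^ 2 / (σ j) ^ 2 ≠ (κ ^ 2) ^ m)
    (hστ : ∀ j : Fin (n + 2), j ≠ 0 → ∀ a : Fin (n + 2),
      ∀ m : ℤ, (σ j) ^ 2 / (τ a) ^ 2 ≠ (κ ^ 2) ^ m) :
    Tendsto
      (fun z : ℂ => (z - κ ^ p * σ 1) *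
        ∑ k ∈ Finset.Nat.antidiagonalTuple (n + 2) K,
          Xsum κ ρ k (Function.update σ 0 z) τ)
      (𝓝[≠] (κ ^ p * σ 1)) (𝓝 0) := by
  have hσ1 : σ 1 ≠ 0 := hσ 1 one_ne_zero
  have hσj (j : Fin n) : σ j.succ.succ ≠ 0 := hσ _ (Fin.succ_ne_zero _)
  have h1j (j : Fin n) (l : ℤ) : (σ 1 / σ j.succ.succ) ^ 2 ≠ (κ ^ 2) ^ l := by
    rw [div_pow]
    exact hσσ 1 _ one_ne_zero (Fin.succ_ne_zero _) (Fin.one_lt_succ_succ j) l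
  have h1τ (t : Fin (n + 2)) (l : ℤ) : (σ 1 / τ t) ^ 2 ≠ (κ ^ 2) ^ l := by
    rw [div_pow]
    exact hστ 1 one_ne_zero t l
  have hlim := (tendsto_finsetSum ((Nat.antidiagonalTuple (n + 2) K).filter
      fun k : Fin (n + 2) → ℕ => (0 : ℤ) ∈ Ico (p - k 1) (p - k 1 + k 0)) fun k hk =>
        tendsto_sub_mul_Xsum_add_Xsum_diagSwap hκ0 hρ0 hκ hσ1 hσj hτ h1j h1τ
          (mem_filter.1 hk).2).add
    (tendsto_finsetSum ((Nat.antidiagonalTuple (n + 2) K).filter fun k : Fin (n + 2) → ℕ =>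
      (0 : ℤ) ∉ Ico (p - k 1) (p - k 1 + k 0) ∧ (0 : ℤ) ∉ Ico (-p - k 0) (-p - k 0 + k 1))
      fun k hk => tendsto_sub_mul_Xsum_of_notMem hκ0 hρ0 hκ hσ1 hσj hτ h1j h1τ
        (mem_filter.1 hk).2.1 (mem_filter.1 hk).2.2)
  rw [sum_const_zero, sum_const_zero, add_zero] at hlim
  refine hlim.congr fun z => ?_
  rw [sum_eq_sum_add_sum_involution (diagSwap p) (fun k => Xsum κ ρ k (Function.update σ 0 z) τ)
    (P := fun k : Fin (n + 2) → ℕ => (0 : ℤ) ∈ Ico (p - k 1) (p - k 1 + k 0))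
    (Q := fun k : Fin (n + 2) → ℕ => (0 : ℤ) ∈ Ico (-p - k 0) (-p - k 0 + k 1))
    (fun _ => diagSwap_of_mem_Ico_left) (fun _ => diagSwap_of_mem_Ico_right)
    (fun k _ hP hQ => by simp only [mem_Ico] at hP hQ; omega), mul_add, mul_sum, mul_sum]
end
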